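/- arXiv:0807.2178 — 8 statements merged into one kernel-verified Lean document; each statement's English description precedes it below -/
import Mathlib

section
/- (Observation 1) Let ρ = (S_1, …, S_n) be a ranking of unit squares with centers c_1, …, c_n, and suppose there are indices i < j < k such that c_j is contained in the axis-parallel rectangle spanned by c_i and c_k. Then S_i does not see S_k under ρ, i.e. {S_i, S_k} is not an edge of the visibility graph G(ρ). -/
/-- The unit square with center `c`: the closed ℓ∞-ball of radius 1
(the product metric on `ℝ × ℝ` is the sup metric). -/
def UnitSq (c : ℝ × ℝ) : Set (ℝ × ℝ) := Metric.closedBall c 1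

/-- Strict lexicographic order on `ℝ × ℝ`. -/
def LexLt (a b : ℝ × ℝ) : Prop := a.1 < b.1 ∨ (a.1 = b.1 ∧ a.2 < b.2)

/-- `p` lies in the axis-parallel rectangle spanned by `a` and `b`. -/
def InRect (p a b : ℝ × ℝ) : Prop :=
  min a.1 b.1 ≤ p.1 ∧ p.1 ≤ max a.1 b.1 ∧ min a.2 b.2 ≤ p.2 ∧ p.2 ≤ max a.2 b.2

/-- In the ranking given by the sequence of centers `c`, square `i` sees square `k`:
some point of `S(c i) ∩ S(c k)` avoids all squares ranked strictly between them. -/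
def Sees {n : ℕ} (c : Fin n → ℝ × ℝ) (i k : Fin n) : Prop :=
  ∃ p ∈ UnitSq (c i) ∩ UnitSq (c k), ∀ j : Fin n, i < j → j < k → p ∉ UnitSq (c j)

lemma aux_between (p a b x : ℝ) (h1 : min a b ≤ x) (h2 : x ≤ max a b) :
    |p - x| ≤ max |p - a| |p - b| := by
  rcases le_total p x with hpx | hpx
  · rw [abs_sub_comm, abs_of_nonneg (by linarith)]
    rcases le_max_iff.mp h2 with h | h
    · exact le_trans (by have := neg_abs_le (p - a); linarith) (le_max_left _ _)
    · exact le_trans (by have := neg_abs_le (p - b); linarith) (le_max_right _ _)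
  · rw [abs_of_nonneg (by linarith)]
    rcases le_min_iff.mp (le_refl (min a b)) with ⟨h, h'⟩
    rcases le_total a b with hab | hab
    · have : a ≤ x := le_trans (by simp [min_def, hab]) h1
      exact le_trans (by have := le_abs_self (p - a); linarith) (le_max_left _ _)
    · have : b ≤ x := le_trans (by simp [min_def, hab]) h1
      exact le_trans (by have := le_abs_self (p - b); linarith) (le_max_right _ _)

/-- Observation 1: if `i < j < k` and `c j` lies in the rectangle spanned by
`c i` and `c k`, then `S_i` does not see `S_k` under the ranking. -/
theorem stmt_1 {n : ℕ} (c : Fin n → ℝ × ℝ) (hc : Function.Injective c)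
    (i j k : Fin n) (hij : i < j) (hjk : j < k)
    (h : InRect (c j) (c i) (c k)) :
    ¬ Sees c i k := by
  rintro ⟨p, ⟨hi, hk⟩, hall⟩
  apply hall j hij hjk
  simp only [UnitSq, Metric.mem_closedBall, Prod.dist_eq, Real.dist_eq, max_le_iff] at *
  obtain ⟨h1, h2, h3, h4⟩ := h
  exact ⟨le_trans (aux_between _ _ _ _ h1 h2) (max_le hi.1 hk.1),
         le_trans (aux_between _ _ _ _ h3 h4) (max_le hi.2 hk.2)⟩
end

section
/- (Case (a) of Lemma 2) Let c_1, c_2, c_3, c_4 ∈ ℝ² be pairwise distinct points in strictly increasing lexicographic order. If the closed segments [c_1, c_3] and [c_2, c_4] have a common point, then c_2 lies in the axis-parallel rectangle spanned by c_1 and c_3, or c_3 lies in the axis-parallel rectangle spanned by c_2 and c_4. -/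
lemma key_case (xa xb xc xd ya yb yc yd t1 t2 s1 s2 : ℝ)
    (ht1 : 0 ≤ t1) (ht2 : 0 ≤ t2) (ht : t1 + t2 = 1)
    (hs1 : 0 ≤ s1) (hs2 : 0 ≤ s2) (hs : s1 + s2 = 1)
    (hx : t1*xa + t2*xc = s1*xb + s2*xd)
    (hy : t1*ya + t2*yc = s1*yb + s2*yd)
    (hab : xa ≤ xb) (hbc : xb ≤ xc) (hcd : xc ≤ xd) (had : xa < xd)
    (h1 : ya < yb) (h2 : yc < yb) (h3 : yc < yd) : False := by
  have hybt : t1*yb + t2*yb = yb := by linear_combination yb * ht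
  have hybs : s1*yb + s2*yb = yb := by linear_combination yb * hs
  have hyds : s1*yd + s2*yd = yd := by linear_combination yd * hs
  have hpy : t1*ya + t2*yc < yb := by
    rcases eq_or_lt_of_le ht1 with h | h
    · have h' : t2 = 1 := by linarith
      rw [← h, h']; linarith
    · have e1 := mul_lt_mul_of_pos_left h1 h
      have e2 := mul_le_mul_of_nonneg_left h2.le ht2
      linarith
  have hdb : yd < yb := by
    by_contra hge
    push_neg at hge
    have := mul_le_mul_of_nonneg_left hge hs2
    linarith
  have hga : (xd - xb)*(ya - yb) - (yd - yb)*(xa - xb) < 0 := by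
    rcases eq_or_lt_of_le hab with h | h
    · nlinarith [mul_pos (show (0:ℝ) < xd - xb by linarith)
        (show (0:ℝ) < yb - ya by linarith)]
    · nlinarith [mul_nonneg (show (0:ℝ) ≤ xd - xb by linarith)
        (show (0:ℝ) ≤ yb - ya by linarith),
        mul_pos (show (0:ℝ) < yb - yd by linarith)
        (show (0:ℝ) < xb - xa by linarith)]
  have hgc : (xd - xb)*(yc - yb) - (yd - yb)*(xc - xb) ≤ 0 := by
    nlinarith [mul_nonneg (show (0:ℝ) ≤ xd - xc by linarith)
      (show (0:ℝ) ≤ yb - yc by linarith),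
      mul_nonneg (show (0:ℝ) ≤ xc - xb by linarith)
      (show (0:ℝ) ≤ yd - yc by linarith)]
  have hgp : t1*((xd - xb)*(ya - yb) - (yd - yb)*(xa - xb))
      + t2*((xd - xb)*(yc - yb) - (yd - yb)*(xc - xb)) = 0 := by
    have h1' : t1 = 1 - t2 := by linarith
    have h2' : s1 = 1 - s2 := by linarith
    subst h1' h2'
    linear_combination (xd - xb)*hy - (yd - yb)*hx
  have ht1z : t1 = 0 := by
    by_contra hne
    have hpos : 0 < t1 := lt_of_le_of_ne ht1 (Ne.symm hne)
    nlinarith [mul_pos hpos (neg_pos.mpr hga), mul_nonpos_of_nonneg_of_nonpos ht2 hgc]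
  have hyc : yc = s1*yb + s2*yd := by
    have h' : t2 = 1 := by linarith
    rw [← hy, ht1z, h']; ring
  have := mul_le_mul_of_nonneg_left hdb.le hs1
  linarith

/-- Case (a) of Lemma 2: if `c1 < c2 < c3 < c4` lexicographically and the closed
segments `[c1,c3]` and `[c2,c4]` meet, then `c2` lies in the rectangle spanned by
`c1, c3`, or `c3` lies in the rectangle spanned by `c2, c4`. -/
theorem stmt_3 (c1 c2 c3 c4 : ℝ × ℝ)
    (h12 : LexLt c1 c2) (h23 : LexLt c2 c3) (h34 : LexLt c3 c4)
    (hcross : (segment ℝ c1 c3 ∩ segment ℝ c2 c4).Nonempty) :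
    InRect c2 c1 c3 ∨ InRect c3 c2 c4 := by
  obtain ⟨p, hp1, hp2⟩ := hcross
  obtain ⟨t1, t2, ht1, ht2, ht, hpt⟩ := hp1
  obtain ⟨s1, s2, hs1, hs2, hs, hps⟩ := hp2
  have hx : t1*c1.1 + t2*c3.1 = s1*c2.1 + s2*c4.1 := by
    have e1 := congrArg Prod.fst hpt
    have e2 := congrArg Prod.fst hps
    simp [smul_eq_mul] at e1 e2
    rw [e1, e2]
  have hy : t1*c1.2 + t2*c3.2 = s1*c2.2 + s2*c4.2 := by
    have e1 := congrArg Prod.snd hpt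
    have e2 := congrArg Prod.snd hps
    simp [smul_eq_mul] at e1 e2
    rw [e1, e2]
  have hx12 : c1.1 ≤ c2.1 := by rcases h12 with h | ⟨h, _⟩; exacts [h.le, h.le]
  have hx23 : c2.1 ≤ c3.1 := by rcases h23 with h | ⟨h, _⟩; exacts [h.le, h.le]
  have hx34 : c3.1 ≤ c4.1 := by rcases h34 with h | ⟨h, _⟩; exacts [h.le, h.le]
  by_contra hcon
  push_neg at hcon
  obtain ⟨hA, hB⟩ := hcon
  have hAy : ¬(min c1.2 c3.2 ≤ c2.2 ∧ c2.2 ≤ max c1.2 c3.2) := fun h =>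
    hA ⟨(min_le_left _ _).trans hx12, hx23.trans (le_max_right _ _), h.1, h.2⟩
  have hBy : ¬(min c2.2 c4.2 ≤ c3.2 ∧ c3.2 ≤ max c2.2 c4.2) := fun h =>
    hB ⟨(min_le_left _ _).trans hx23, hx34.trans (le_max_right _ _), h.1, h.2⟩
  have hA' : c2.2 < c1.2 ∧ c2.2 < c3.2 ∨ c1.2 < c2.2 ∧ c3.2 < c2.2 := by
    rcases not_and_or.mp hAy with h | h <;> push_neg at h
    · exact Or.inl (lt_min_iff.mp h)
    · exact Or.inr (max_lt_iff.mp h)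
  have hB' : c3.2 < c2.2 ∧ c3.2 < c4.2 ∨ c2.2 < c3.2 ∧ c4.2 < c3.2 := by
    rcases not_and_or.mp hBy with h | h <;> push_neg at h
    · exact Or.inl (lt_min_iff.mp h)
    · exact Or.inr (max_lt_iff.mp h)
  rcases hA' with ⟨ha1, ha2⟩ | ⟨ha1, ha2⟩ <;> rcases hB' with ⟨hb1, hb2⟩ | ⟨hb1, hb2⟩
  · -- c2 below, c3 below: c2.2 < c3.2 and c3.2 < c2.2
    linarith
  · -- c2 below, c3 above: apply key_case with negated y
    have had : c1.1 < c4.1 := by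
      rcases eq_or_lt_of_le (hx12.trans (hx23.trans hx34)) with h | h
      · exfalso
        rcases h12 with h' | ⟨_, h'⟩
        · linarith
        · linarith
      · exact h
    exact key_case c1.1 c2.1 c3.1 c4.1 (-c1.2) (-c2.2) (-c3.2) (-c4.2) t1 t2 s1 s2
      ht1 ht2 ht hs1 hs2 hs hx (by linarith) hx12 hx23 hx34 had
      (by linarith) (by linarith) (by linarith)
  · -- c2 above, c3 below
    have had : c1.1 < c4.1 := by
      rcases eq_or_lt_of_le (hx12.trans (hx23.trans hx34)) with h | h
      · exfalso
        rcases h23 with h' | ⟨_, h'⟩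
        · linarith
        · linarith
      · exact h
    exact key_case c1.1 c2.1 c3.1 c4.1 c1.2 c2.2 c3.2 c4.2 t1 t2 s1 s2
      ht1 ht2 ht hs1 hs2 hs hx hy hx12 hx23 hx34 had ha1 hb1 hb2
  · -- c2 above, c3 above
    linarith
end

section
/- (Case (b) of Lemma 2, case analysis) Let c_1, c_2, c_3, c_4 ∈ ℝ² be pairwise distinct points in strictly increasing lexicographic order, with c_i = (x_i, y_i), and suppose that the closed segments [c_1, c_4] and [c_2, c_3] have a common point. If neither c_2 nor c_3 lies in the axis-parallel rectangle spanned by c_1 and c_4, then either (y_2 < min(y_1, y_4) and y_3 > max(y_1, y_4)) or (y_3 < min(y_1, y_4) and y_2 > max(y_1, y_4)). -/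
/-- Case (b) of Lemma 2, case analysis: if `c1 < c2 < c3 < c4` lexicographically,
the segments `[c1,c4]` and `[c2,c3]` meet, and neither `c2` nor `c3` lies in the
rectangle spanned by `c1, c4`, then the `y`-coordinates of `c2, c3` straddle those
of `c1, c4` in one of the two ways. -/
theorem stmt_4 (c1 c2 c3 c4 : ℝ × ℝ)
    (h12 : LexLt c1 c2) (h23 : LexLt c2 c3) (h34 : LexLt c3 c4)
    (hcross : (segment ℝ c1 c4 ∩ segment ℝ c2 c3).Nonempty)
    (h2 : ¬ InRect c2 c1 c4) (h3 : ¬ InRect c3 c1 c4) :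
    (c2.2 < min c1.2 c4.2 ∧ c3.2 > max c1.2 c4.2) ∨
    (c3.2 < min c1.2 c4.2 ∧ c2.2 > max c1.2 c4.2) := by
  obtain ⟨p, hp14, hp23⟩ := hcross
  obtain ⟨a, b, ha, hb, hab, hp1⟩ := hp14
  obtain ⟨s, t, hs, ht, hst, hp2⟩ := hp23
  have hx12 : c1.1 ≤ c2.1 := by rcases h12 with h | ⟨h, _⟩ <;> linarith
  have hx23 : c2.1 ≤ c3.1 := by rcases h23 with h | ⟨h, _⟩ <;> linarith
  have hx34 : c3.1 ≤ c4.1 := by rcases h34 with h | ⟨h, _⟩ <;> linarith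
  have e1 : a * c1.2 + b * c4.2 = p.2 := congrArg Prod.snd hp1
  have e2 : s * c2.2 + t * c3.2 = p.2 := congrArg Prod.snd hp2
  simp only [InRect, not_and_or, not_le] at h2 h3
  have hmin1 : min c1.1 c4.1 = c1.1 := min_eq_left (by linarith)
  have hmax1 : max c1.1 c4.1 = c4.1 := max_eq_right (by linarith)
  rw [hmin1, hmax1] at h2 h3
  have h2' : c2.2 < min c1.2 c4.2 ∨ max c1.2 c4.2 < c2.2 := by
    rcases h2 with h | h | h | h
    · linarith
    · linarith
    · left; exact h
    · right; exact h
  have h3' : c3.2 < min c1.2 c4.2 ∨ max c1.2 c4.2 < c3.2 := by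
    rcases h3 with h | h | h | h
    · linarith
    · linarith
    · left; exact h
    · right; exact h
  have habm : a * (min c1.2 c4.2) + b * (min c1.2 c4.2) = min c1.2 c4.2 := by
    rw [← add_mul, hab, one_mul]
  have habM : a * (max c1.2 c4.2) + b * (max c1.2 c4.2) = max c1.2 c4.2 := by
    rw [← add_mul, hab, one_mul]
  have hstm : s * (min c1.2 c4.2) + t * (min c1.2 c4.2) = min c1.2 c4.2 := by
    rw [← add_mul, hst, one_mul]
  have hstM : s * (max c1.2 c4.2) + t * (max c1.2 c4.2) = max c1.2 c4.2 := by
    rw [← add_mul, hst, one_mul]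
  have hlo : min c1.2 c4.2 ≤ p.2 := by
    have u1 := mul_le_mul_of_nonneg_left (min_le_left c1.2 c4.2) ha
    have u2 := mul_le_mul_of_nonneg_left (min_le_right c1.2 c4.2) hb
    linarith
  have hhi : p.2 ≤ max c1.2 c4.2 := by
    have u1 := mul_le_mul_of_nonneg_left (le_max_left c1.2 c4.2) ha
    have u2 := mul_le_mul_of_nonneg_left (le_max_right c1.2 c4.2) hb
    linarith
  rcases h2' with h2a | h2a <;> rcases h3' with h3a | h3a
  · exfalso
    rcases eq_or_lt_of_le hs with hs0 | hs0
    · have ht1 : t = 1 := by linarith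
      rw [← hs0, ht1] at e2; simp at e2; linarith
    · have := mul_lt_mul_of_pos_left h2a hs0
      have := mul_le_mul_of_nonneg_left h3a.le ht
      nlinarith
  · left; exact ⟨h2a, h3a⟩
  · right; exact ⟨h3a, h2a⟩
  · exfalso
    rcases eq_or_lt_of_le hs with hs0 | hs0
    · have ht1 : t = 1 := by linarith
      rw [← hs0, ht1] at e2; simp at e2; linarith
    · have := mul_lt_mul_of_pos_left h2a hs0
      have := mul_le_mul_of_nonneg_left h3a.le ht
      nlinarith
end

section
/- (Key claim in Case (b) of Lemma 2) Let c_1, c_2, c_3, c_4 ∈ ℝ² be points in (weakly increasing) lexicographic order with c_i = (x_i, y_i), and suppose y_2 < min(y_1, y_4) and y_3 > max(y_1, y_4). If S(c_2) ∩ S(c_3) ≠ ∅, then S(c_1) ∩ S(c_4) ⊆ S(c_2) ∪ S(c_3). -/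
/-- Weak lexicographic order on `ℝ × ℝ`. -/
def LexLe (a b : ℝ × ℝ) : Prop := a.1 < b.1 ∨ (a.1 = b.1 ∧ a.2 ≤ b.2)

/-- Key claim in Case (b) of Lemma 2: with `c1 ≤ c2 ≤ c3 ≤ c4` lexicographically,
`y2 < min(y1,y4)` and `y3 > max(y1,y4)`, if `S(c2) ∩ S(c3) ≠ ∅` then
`S(c1) ∩ S(c4) ⊆ S(c2) ∪ S(c3)`. -/
theorem stmt_5 (c1 c2 c3 c4 : ℝ × ℝ)
    (h12 : LexLe c1 c2) (h23 : LexLe c2 c3) (h34 : LexLe c3 c4)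
    (hy2 : c2.2 < min c1.2 c4.2) (hy3 : c3.2 > max c1.2 c4.2)
    (hne : (UnitSq c2 ∩ UnitSq c3).Nonempty) :
    UnitSq c1 ∩ UnitSq c4 ⊆ UnitSq c2 ∪ UnitSq c3 := by

  have hmem : ∀ (p c : ℝ × ℝ), p ∈ UnitSq c ↔ |p.1 - c.1| ≤ 1 ∧ |p.2 - c.2| ≤ 1 := by
    intro p c
    simp [UnitSq, Metric.mem_closedBall, Prod.dist_eq, Real.dist_eq, max_le_iff]
  have hx : ∀ a b : ℝ × ℝ, LexLe a b → a.1 ≤ b.1 := by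
    rintro a b (h | ⟨h, _⟩); exact le_of_lt h; exact le_of_eq h
  have hx12 := hx _ _ h12
  have hx23 := hx _ _ h23
  have hx34 := hx _ _ h34
  obtain ⟨q, hq2, hq3⟩ := hne
  rw [hmem] at hq2 hq3
  simp only [abs_le] at hq2 hq3
  intro p ⟨hp1, hp4⟩
  rw [hmem] at hp1 hp4
  simp only [abs_le] at hp1 hp4
  simp only [lt_min_iff] at hy2
  simp only [gt_iff_lt, max_lt_iff] at hy3
  by_cases h : p.2 ≤ c2.2 + 1
  · left
    rw [hmem]; simp only [abs_le]
    constructor <;> constructor <;> linarith [hq2.1.1, hq2.2.1, hq3.1.1, hq3.2.1, hq2.1.2, hq2.2.2, hq3.1.2, hq3.2.2, hp1.1.1, hp1.1.2, hp1.2.1, hp1.2.2, hp4.1.1, hp4.1.2, hp4.2.1, hp4.2.2, hy2.1, hy2.2, hy3.1, hy3.2]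
  · right
    rw [hmem]; simp only [abs_le]
    constructor <;> constructor <;> linarith [hq2.1.1, hq2.2.1, hq3.1.1, hq3.2.1, hq2.1.2, hq2.2.2, hq3.1.2, hq3.2.2, hp1.1.1, hp1.1.2, hp1.2.1, hp1.2.2, hp4.1.1, hp4.1.2, hp4.2.1, hp4.2.2, hy2.1, hy2.2, hy3.1, hy3.2]
end

section
/- (Lemma 2, crossing form for four squares) Let ρ_lex = (S_1, S_2, S_3, S_4) be the lexicographic ranking of four unit squares with pairwise distinct centers c_1 < c_2 < c_3 < c_4 (lexicographically). If the closed segments [c_1, c_3] and [c_2, c_4] have a common point, then {S_1, S_3} and {S_2, S_4} are not both edges of the visibility graph G(ρ_lex); and if the closed segments [c_1, c_4] and [c_2, c_3] have a common point, then {S_1, S_4} and {S_2, S_3} are not both edges of G(ρ_lex). -/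
lemma mem_sq_iff {p c : ℝ × ℝ} : p ∈ UnitSq c ↔ |p.1 - c.1| ≤ 1 ∧ |p.2 - c.2| ≤ 1 := by
  simp [UnitSq, Metric.mem_closedBall, Prod.dist_eq, Real.dist_eq, max_le_iff]

lemma seg_coords {q a b : ℝ × ℝ} (h : q ∈ segment ℝ a b) :
    ∃ u v : ℝ, 0 ≤ u ∧ 0 ≤ v ∧ u + v = 1 ∧
      q.1 = u * a.1 + v * b.1 ∧ q.2 = u * a.2 + v * b.2 := by
  obtain ⟨u, v, hu, hv, huv, hq⟩ := h
  refine ⟨u, v, hu, hv, huv, ?_, ?_⟩ <;> rw [← hq] <;>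
    simp [Prod.fst_add, Prod.snd_add, Prod.smul_fst, Prod.smul_snd, smul_eq_mul]

lemma betw1 {a b c p : ℝ} (h1 : a ≤ b) (h2 : b ≤ c)
    (ha : |p - a| ≤ 1) (hc : |p - c| ≤ 1) : |p - b| ≤ 1 := by
  rw [abs_le] at *
  constructor <;> linarith [ha.1, ha.2, hc.1, hc.2]

lemma conv_ge {u v a b m q : ℝ} (hu : 0 ≤ u) (hv : 0 ≤ v) (huv : u + v = 1)
    (hq : q = u*a + v*b) (ha : m ≤ a) (hb : m ≤ b) : m ≤ q := by
  have h1 := mul_nonneg hu (sub_nonneg.2 ha)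
  have h2 := mul_nonneg hv (sub_nonneg.2 hb)
  have h3 : m*u + m*v = m := by linear_combination m*huv
  nlinarith

lemma conv_le {u v a b m q : ℝ} (hu : 0 ≤ u) (hv : 0 ≤ v) (huv : u + v = 1)
    (hq : q = u*a + v*b) (ha : a ≤ m) (hb : b ≤ m) : q ≤ m := by
  have h1 := mul_nonneg hu (sub_nonneg.2 ha)
  have h2 := mul_nonneg hv (sub_nonneg.2 hb)
  have h3 : m*u + m*v = m := by linear_combination m*huv
  nlinarith

lemma conv_lt {u v a b m q : ℝ} (hu : 0 ≤ u) (hv : 0 ≤ v) (huv : u + v = 1)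
    (hq : q = u*a + v*b) (ha : a < m) (hb : b < m) : q < m := by
  rcases le_total a b with h | h
  · have := conv_le hu hv huv hq h (le_refl b)
    linarith
  · have := conv_le hu hv huv hq (le_refl a) h
    linarith

lemma conv_gt {u v a b m q : ℝ} (hu : 0 ≤ u) (hv : 0 ≤ v) (huv : u + v = 1)
    (hq : q = u*a + v*b) (ha : m < a) (hb : m < b) : m < q := by
  rcases le_total a b with h | h
  · have := conv_ge hu hv huv hq (le_refl a) h
    linarith
  · have := conv_ge hu hv huv hq h (le_refl b)
    linarith

lemma coreA (x0 x1 x2 x3 y0 y1 y2 y3 qx qy u v s t α β : ℝ)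
    (hx01 : x0 ≤ x1) (hx12 : x1 ≤ x2) (hx23 : x2 ≤ x3)
    (hdeg : x0 = x3 → False)
    (hu : 0 ≤ u) (hv : 0 ≤ v) (huv : u + v = 1)
    (hs : 0 ≤ s) (ht : 0 ≤ t) (hst : s + t = 1)
    (hqxA : qx = u*x0 + v*x2) (hqyA : qy = u*y0 + v*y2)
    (hqxB : qx = s*x1 + t*x3) (hqyB : qy = s*y1 + t*y3)
    (hy0 : α ≤ y0) (hy2 : α ≤ y2) (h1α : y1 < α)
    (hy1 : y1 ≤ β) (hy3 : y3 ≤ β) (h2β : β < y2) : False := by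
  have hauv : α * u + α * v = α := by linear_combination α * huv
  have hast : α * s + α * t = α := by linear_combination α * hst
  have hbuv : β * u + β * v = β := by linear_combination β * huv
  have hbst : β * s + β * t = β := by linear_combination β * hst
  have h1uv : x1 * u + x1 * v = x1 := by linear_combination x1 * huv
  have h1st : x1 * s + x1 * t = x1 := by linear_combination x1 * hst
  have h2uv : x2 * u + x2 * v = x2 := by linear_combination x2 * huv
  have h2st : x2 * s + x2 * t = x2 := by linear_combination x2 * hst
  have hqyα : α ≤ qy := by
    linarith [mul_nonneg hu (sub_nonneg.2 hy0), mul_nonneg hv (sub_nonneg.2 hy2)]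
  have hqyβ : qy ≤ β := by
    linarith [mul_nonneg hs (sub_nonneg.2 hy1), mul_nonneg ht (sub_nonneg.2 hy3)]
  have hx1q : x1 ≤ qx := by
    linarith [mul_nonneg ht (sub_nonneg.2 (hx12.trans hx23)), mul_nonneg hs (sub_nonneg.2 (le_refl x1))]
  have hqx2 : qx ≤ x2 := by
    linarith [mul_nonneg hu (sub_nonneg.2 (hx01.trans hx12)), mul_nonneg hv (sub_nonneg.2 (le_refl x2))]
  rcases (hx01.trans hx12).eq_or_lt with h02 | h02
  · -- x0 = x2, so x0 = x1 = x2
    have e01 : x0 = x1 := le_antisymm hx01 (h02 ▸ hx12)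
    rcases (hx12.trans hx23).eq_or_lt with h13 | h13
    · exact hdeg (e01.trans h13)
    · -- x1 < x3
      have hqx : qx = x1 := by linear_combination hqxA + x0 * huv + e01 - v * h02
      have h5 : t * (x3 - x1) = 0 := by linear_combination hqx - hqxB - x1 * hst
      have ht0 : t = 0 := by
        rcases mul_eq_zero.1 h5 with h | h
        · exact h
        · linarith
      have hs1 : s = 1 := by linarith
      have : qy = y1 := by rw [hqyB, ht0, hs1]; ring
      linarith
  · rcases (hx12.trans hx23).eq_or_lt with h13 | h13
    · -- x1 = x3, so x1 = x2 = x3, and x0 < x2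
      have e12 : x1 = x2 := le_antisymm hx12 (h13 ▸ hx23)
      have hqx : qx = x2 := by linear_combination hqxB + x1 * hst - t * h13 + e12
      have h5 : u * (x2 - x0) = 0 := by linear_combination hqxA - hqx + x2 * huv
      have hu0 : u = 0 := by
        rcases mul_eq_zero.1 h5 with h | h
        · exact h
        · linarith
      have hv1 : v = 1 := by linarith
      have : qy = y2 := by rw [hqyA, hu0, hv1]; ring
      linarith
    · -- nondegenerate: x0 < x2, x1 < x3
      have inner1 : 0 < (x2 - x1)*y0 + (x1 - x0)*y2 - (x2 - x0)*y1 := by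
        linarith [mul_nonneg (sub_nonneg.2 hx12) (sub_nonneg.2 hy0),
          mul_nonneg (sub_nonneg.2 hx01) (sub_nonneg.2 hy2),
          mul_pos (sub_pos.2 h02) (sub_pos.2 h1α)]
      have inner2 : 0 < (x3 - x1)*y2 - (x3 - x2)*y1 - (x2 - x1)*y3 := by
        linarith [mul_nonneg (sub_nonneg.2 hx23) (sub_nonneg.2 hy1),
          mul_nonneg (sub_nonneg.2 hx12) (sub_nonneg.2 hy3),
          mul_pos (sub_pos.2 h13) (sub_pos.2 h2β)]
      have hG1 : 0 < (x3 - x1) * ((x2 - x1)*y0 + (x1 - x0)*y2 - (x2 - x0)*y1) :=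
        mul_pos (sub_pos.2 h13) inner1
      have hG2 : 0 < (x2 - x0) * ((x3 - x1)*y2 - (x3 - x2)*y1 - (x2 - x1)*y3) :=
        mul_pos (sub_pos.2 h02) inner2
      have hGq : (x3 - x1)*((x2 - qx)*y0 + (qx - x0)*y2)
          - (x2 - x0)*((x3 - qx)*y1 + (qx - x1)*y3) = 0 := by
        linear_combination ((x3-x1)*(x2-x0)) * hqyB - ((x3-x1)*(x2-x0)) * hqyA
          + ((x3-x1)*(y2-y0)) * hqxA + ((x3-x1)*(x0*y2-x2*y0)) * huv
          - ((x2-x0)*(y3-y1)) * hqxB - ((x2-x0)*(x1*y3-x3*y1)) * hst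
      have key : (x2 - qx) * ((x3 - x1) * ((x2 - x1)*y0 + (x1 - x0)*y2 - (x2 - x0)*y1))
          + (qx - x1) * ((x2 - x0) * ((x3 - x1)*y2 - (x3 - x2)*y1 - (x2 - x1)*y3))
          = 0 := by linear_combination (x2 - x1) * hGq
      have c1 : 0 ≤ (x2 - qx) * ((x3 - x1) * ((x2 - x1)*y0 + (x1 - x0)*y2 - (x2 - x0)*y1)) :=
        mul_nonneg (by linarith) hG1.le
      have c2 : 0 ≤ (qx - x1) * ((x2 - x0) * ((x3 - x1)*y2 - (x3 - x2)*y1 - (x2 - x1)*y3)) :=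
        mul_nonneg (by linarith) hG2.le
      have hz1 : (x2 - qx) * ((x3 - x1) * ((x2 - x1)*y0 + (x1 - x0)*y2 - (x2 - x0)*y1)) = 0 := by
        linarith
      have hz2 : (qx - x1) * ((x2 - x0) * ((x3 - x1)*y2 - (x3 - x2)*y1 - (x2 - x1)*y3)) = 0 := by
        linarith
      rcases mul_eq_zero.1 hz1 with h | h
      · rcases mul_eq_zero.1 hz2 with h' | h'
        · have hfin : (x3 - x1) * ((x2 - x1)*y0 + (x1 - x0)*y2 - (x2 - x0)*y1) = 0 := by
            linear_combination hGq - ((x3-x1)*(y2-y0) - (x2-x0)*(y3-y1)) * h'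
          linarith
        · linarith
      · linarith

/-- Lemma 2 (crossing form for four squares): in the lexicographic ranking of four
unit squares, if the segments between centers of the pairs `{1,3}` and `{2,4}` cross,
then these two pairs are not both visibility edges; likewise for `{1,4}` and `{2,3}`. -/
theorem stmt_6 (c : Fin 4 → ℝ × ℝ)
    (hlex : ∀ i j : Fin 4, i < j → LexLt (c i) (c j)) :
    ((segment ℝ (c 0) (c 2) ∩ segment ℝ (c 1) (c 3)).Nonempty →
      ¬ (Sees c 0 2 ∧ Sees c 1 3)) ∧
    ((segment ℝ (c 0) (c 3) ∩ segment ℝ (c 1) (c 2)).Nonempty →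
      ¬ (Sees c 0 3 ∧ Sees c 1 2)) := by
  have lex01 := hlex 0 1 (by decide)
  have lex12 := hlex 1 2 (by decide)
  have lex23 := hlex 2 3 (by decide)
  have hx01 : (c 0).1 ≤ (c 1).1 := lex01.elim le_of_lt (fun h => le_of_eq h.1)
  have hx12 : (c 1).1 ≤ (c 2).1 := lex12.elim le_of_lt (fun h => le_of_eq h.1)
  have hx23 : (c 2).1 ≤ (c 3).1 := lex23.elim le_of_lt (fun h => le_of_eq h.1)
  constructor
  · rintro ⟨q, hqA, hqB⟩ ⟨⟨p, ⟨hp0, hp2⟩, hpav⟩, ⟨r, ⟨hr1, hr3⟩, hrav⟩⟩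
    have hnp1 : p ∉ UnitSq (c 1) := hpav 1 (by decide) (by decide)
    have hnr2 : r ∉ UnitSq (c 2) := hrav 2 (by decide) (by decide)
    obtain ⟨hp0x, hp0y⟩ := mem_sq_iff.1 hp0
    obtain ⟨hp2x, hp2y⟩ := mem_sq_iff.1 hp2
    obtain ⟨hr1x, hr1y⟩ := mem_sq_iff.1 hr1
    obtain ⟨hr3x, hr3y⟩ := mem_sq_iff.1 hr3
    have hpx1 : |p.1 - (c 1).1| ≤ 1 := betw1 hx01 hx12 hp0x hp2x
    have hrx2 : |r.1 - (c 2).1| ≤ 1 := betw1 hx12 hx23 hr1x hr3x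
    have hpy1 : 1 < |p.2 - (c 1).2| := by
      by_contra h
      exact hnp1 (mem_sq_iff.2 ⟨hpx1, le_of_not_gt h⟩)
    have hry2 : 1 < |r.2 - (c 2).2| := by
      by_contra h
      exact hnr2 (mem_sq_iff.2 ⟨hrx2, le_of_not_gt h⟩)
    obtain ⟨u, v, hu, hv, huv, hqxA, hqyA⟩ := seg_coords hqA
    obtain ⟨s, t, hs, ht, hst, hqxB, hqyB⟩ := seg_coords hqB
    rw [abs_le] at hp0y hp2y hr1y hr3y
    rcases lt_abs.1 hpy1 with hc1 | hc1 <;> rcases lt_abs.1 hry2 with hc2 | hc2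
    · -- p above S1, r above S2
      linarith [hp2y.2, hr1y.2]
    · -- p above S1, r below S2 : main crossing argument
      exact coreA (c 0).1 (c 1).1 (c 2).1 (c 3).1 (c 0).2 (c 1).2 (c 2).2 (c 3).2
        q.1 q.2 u v s t (p.2 - 1) (r.2 + 1) hx01 hx12 hx23
        (fun h03 => by
          have e01 : (c 0).1 = (c 1).1 := le_antisymm hx01 (by linarith)
          rcases lex01 with h | ⟨_, h⟩
          · exact absurd e01 (ne_of_lt h)
          · linarith [hp0y.2])
        hu hv huv hs ht hst hqxA hqyA hqxB hqyB
        (by linarith [hp0y.2]) (by linarith [hp2y.2]) (by linarith)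
        (by linarith [hr1y.1]) (by linarith [hr3y.1]) (by linarith)
    · -- p below S1, r above S2 : flipped crossing argument
      exact coreA (c 0).1 (c 1).1 (c 2).1 (c 3).1
        (-(c 0).2) (-(c 1).2) (-(c 2).2) (-(c 3).2)
        q.1 (-q.2) u v s t (-(p.2 + 1)) (-(r.2 - 1)) hx01 hx12 hx23
        (fun h03 => by
          have e12 : (c 1).1 = (c 2).1 := le_antisymm hx12 (by linarith)
          rcases lex12 with h | ⟨_, h⟩
          · exact absurd e12 (ne_of_lt h)
          · linarith [hp2y.1])
        hu hv huv hs ht hst hqxA (by linear_combination -hqyA)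
        hqxB (by linear_combination -hqyB)
        (by linarith [hp0y.1]) (by linarith [hp2y.1]) (by linarith)
        (by linarith [hr1y.2]) (by linarith [hr3y.2]) (by linarith)
    · -- p below S1, r below S2
      linarith [hp2y.1, hr1y.1]
  · rintro ⟨q, hqA, hqB⟩ ⟨⟨p, ⟨hp0, hp3⟩, hpav⟩, ⟨r, ⟨hr1, hr2⟩, -⟩⟩
    have hnp1 : p ∉ UnitSq (c 1) := hpav 1 (by decide) (by decide)
    have hnp2 : p ∉ UnitSq (c 2) := hpav 2 (by decide) (by decide)
    obtain ⟨hp0x, hp0y⟩ := mem_sq_iff.1 hp0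
    obtain ⟨hp3x, hp3y⟩ := mem_sq_iff.1 hp3
    obtain ⟨hr1x, hr1y⟩ := mem_sq_iff.1 hr1
    obtain ⟨hr2x, hr2y⟩ := mem_sq_iff.1 hr2
    have hpx1 : |p.1 - (c 1).1| ≤ 1 := betw1 hx01 (hx12.trans hx23) hp0x hp3x
    have hpx2 : |p.1 - (c 2).1| ≤ 1 := betw1 (hx01.trans hx12) hx23 hp0x hp3x
    have hpy1 : 1 < |p.2 - (c 1).2| := by
      by_contra h
      exact hnp1 (mem_sq_iff.2 ⟨hpx1, le_of_not_gt h⟩)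
    have hpy2 : 1 < |p.2 - (c 2).2| := by
      by_contra h
      exact hnp2 (mem_sq_iff.2 ⟨hpx2, le_of_not_gt h⟩)
    obtain ⟨u, v, hu, hv, huv, hqxA, hqyA⟩ := seg_coords hqA
    obtain ⟨s, t, hs, ht, hst, hqxB, hqyB⟩ := seg_coords hqB
    rw [abs_le] at hp0y hp3y hr1y hr2y
    rcases lt_abs.1 hpy1 with hc1 | hc1 <;> rcases lt_abs.1 hpy2 with hc2 | hc2
    · -- p above both S1 and S2
      have h1 : p.2 - 1 ≤ q.2 :=
        conv_ge hu hv huv hqyA (by linarith [hp0y.2]) (by linarith [hp3y.2])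
      have h2 : q.2 < p.2 - 1 :=
        conv_lt hs ht hst hqyB (by linarith) (by linarith)
      linarith
    · -- p above S1, below S2 : S1 and S2 too far apart vertically
      linarith [hr1y.1, hr1y.2, hr2y.1, hr2y.2]
    · -- p below S1, above S2
      linarith [hr1y.1, hr1y.2, hr2y.1, hr2y.2]
    · -- p below both S1 and S2
      have h1 : q.2 ≤ p.2 + 1 :=
        conv_le hu hv huv hqyA (by linarith [hp0y.1]) (by linarith [hp3y.1])
      have h2 : p.2 + 1 < q.2 :=
        conv_gt hs ht hst hqyB (by linarith) (by linarith)
      linarith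
end

section
/- (No enclosing triangle, from the proof of Theorem 3) Let ρ_lex = (S_1, …, S_n) be the lexicographic ranking of n unit squares with pairwise distinct centers c_1 < c_2 < ⋯ < c_n (lexicographically). Suppose i < j < k and there is a further index m ∉ {i, j, k} such that c_m lies in the closed triangle (convex hull) spanned by c_i, c_j, c_k. Then at least one of the three pairs {S_i, S_j}, {S_j, S_k}, {S_i, S_k} is not an edge of the visibility graph G(ρ_lex). -/
/-- A square whose center lies in the rectangle spanned by two other centers blocks
visibility between them (if ranked strictly between). -/
lemma blocks {n : ℕ} (c : Fin n → ℝ × ℝ) (a d b : Fin n) (h1 : a < d) (h2 : d < b)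
    (hr : InRect (c d) (c a) (c b)) : ¬ Sees c a b := by
  rintro ⟨p, ⟨hpa, hpb⟩, hfree⟩
  refine hfree d h1 h2 ?_
  simp only [UnitSq, Metric.mem_closedBall, Prod.dist_eq, max_le_iff, Real.dist_eq,
    abs_le] at hpa hpb ⊢
  obtain ⟨hr1, hr2, hr3, hr4⟩ := hr
  rw [min_le_iff] at hr1 hr3
  rw [le_max_iff] at hr2 hr4
  refine ⟨⟨?_, ?_⟩, ?_, ?_⟩ <;>
    rcases hr1 with h1|h1 <;> rcases hr2 with h2|h2 <;>
    rcases hr3 with h3|h3 <;> rcases hr4 with h4|h4 <;>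
    linarith [hpa.1.1, hpa.1.2, hpa.2.1, hpa.2.2, hpb.1.1, hpb.1.2, hpb.2.1, hpb.2.2]

/-- Extract explicit convex-combination coefficients from membership in the hull
of three points in the plane. -/
lemma hullCoeffs (a b d p : ℝ × ℝ) (hm : p ∈ convexHull ℝ ({a, b, d} : Set (ℝ × ℝ))) :
    ∃ α β γ : ℝ, 0 ≤ α ∧ 0 ≤ β ∧ 0 ≤ γ ∧ α + β + γ = 1 ∧
      p.1 = α * a.1 + β * b.1 + γ * d.1 ∧ p.2 = α * a.2 + β * b.2 + γ * d.2 := by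
  rw [show ({a, b, d} : Set (ℝ × ℝ)) = insert a {b, d} from rfl,
    convexHull_insert ⟨b, by simp⟩, mem_convexJoin] at hm
  obtain ⟨x, hx, z, hz, hmz⟩ := hm
  rw [Set.mem_singleton_iff] at hx
  subst hx
  rw [convexHull_pair] at hz
  obtain ⟨u, v, hu, hv, huv, hzeq⟩ := hz
  obtain ⟨s, t, hs, ht, hst, hmeq⟩ := hmz
  subst hzeq
  refine ⟨s, t * u, t * v, hs, by positivity, by positivity, by nlinarith, ?_, ?_⟩
  · have h1 := congrArg Prod.fst hmeq
    simp only [Prod.fst_add, Prod.smul_fst, smul_eq_mul] at h1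
    linear_combination -h1
  · have h2 := congrArg Prod.snd hmeq
    simp only [Prod.snd_add, Prod.smul_snd, smul_eq_mul] at h2
    linear_combination -h2

/-- A convex combination lies between the extremes. -/
lemma comboBounds (α β γ yi yj yk ym : ℝ) (hα : 0 ≤ α) (hβ : 0 ≤ β) (hγ : 0 ≤ γ)
    (hsum : α + β + γ = 1) (hy : ym = α * yi + β * yj + γ * yk) :
    (yi ≤ ym ∨ yj ≤ ym ∨ yk ≤ ym) ∧ (ym ≤ yi ∨ ym ≤ yj ∨ ym ≤ yk) := by
  constructor
  · by_contra hc
    push_neg at hc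
    obtain ⟨h1, h2, h3⟩ := hc
    have e : α * (yi - ym) + β * (yj - ym) + γ * (yk - ym) = 0 := by
      linear_combination -hy - ym * hsum
    have p1 : 0 ≤ α * (yi - ym) := mul_nonneg hα (by linarith)
    have p2 : 0 ≤ β * (yj - ym) := mul_nonneg hβ (by linarith)
    have p3 : 0 ≤ γ * (yk - ym) := mul_nonneg hγ (by linarith)
    have z1 : α * (yi - ym) = 0 := by linarith
    have z2 : β * (yj - ym) = 0 := by linarith
    have z3 : γ * (yk - ym) = 0 := by linarith
    have hα0 : α = 0 := by rcases mul_eq_zero.1 z1 with h|h; exact h; linarith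
    have hβ0 : β = 0 := by rcases mul_eq_zero.1 z2 with h|h; exact h; linarith
    have hγ0 : γ = 0 := by rcases mul_eq_zero.1 z3 with h|h; exact h; linarith
    rw [hα0, hβ0, hγ0] at hsum; linarith
  · by_contra hc
    push_neg at hc
    obtain ⟨h1, h2, h3⟩ := hc
    have e : α * (ym - yi) + β * (ym - yj) + γ * (ym - yk) = 0 := by
      linear_combination hy + ym * hsum
    have p1 : 0 ≤ α * (ym - yi) := mul_nonneg hα (by linarith)
    have p2 : 0 ≤ β * (ym - yj) := mul_nonneg hβ (by linarith)
    have p3 : 0 ≤ γ * (ym - yk) := mul_nonneg hγ (by linarith)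
    have z1 : α * (ym - yi) = 0 := by linarith
    have z2 : β * (ym - yj) = 0 := by linarith
    have z3 : γ * (ym - yk) = 0 := by linarith
    have hα0 : α = 0 := by rcases mul_eq_zero.1 z1 with h|h; exact h; linarith
    have hβ0 : β = 0 := by rcases mul_eq_zero.1 z2 with h|h; exact h; linarith
    have hγ0 : γ = 0 := by rcases mul_eq_zero.1 z3 with h|h; exact h; linarith
    rw [hα0, hβ0, hγ0] at hsum; linarith

set_option linter.unreachableTactic false in
set_option linter.unusedTactic false in
/-- One of: `ym` between `yi,yj`; `ym` between `yi,yk`; `yj` between `yi,yk`. -/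
lemma ydisj (yi yj yk ym : ℝ)
    (hlb : yi ≤ ym ∨ yj ≤ ym ∨ yk ≤ ym)
    (hub : ym ≤ yi ∨ ym ≤ yj ∨ ym ≤ yk) :
    ((yi ≤ ym ∨ yj ≤ ym) ∧ (ym ≤ yi ∨ ym ≤ yj)) ∨
    ((yi ≤ ym ∨ yk ≤ ym) ∧ (ym ≤ yi ∨ ym ≤ yk)) ∨
    ((yi ≤ yj ∨ yk ≤ yj) ∧ (yj ≤ yi ∨ yj ≤ yk)) := by
  rcases hlb with h1|h1|h1 <;> rcases hub with h2|h2|h2 <;>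
  rcases le_total yj yi with h3|h3 <;> rcases le_total yj yk with h4|h4 <;>
  rcases le_total ym yi with h5|h5 <;>
  first
  | exact Or.inl ⟨Or.inl (by linarith), Or.inl (by linarith)⟩
  | exact Or.inl ⟨Or.inl (by linarith), Or.inr (by linarith)⟩
  | exact Or.inl ⟨Or.inr (by linarith), Or.inl (by linarith)⟩
  | exact Or.inl ⟨Or.inr (by linarith), Or.inr (by linarith)⟩
  | exact Or.inr (Or.inl ⟨Or.inl (by linarith), Or.inl (by linarith)⟩)
  | exact Or.inr (Or.inl ⟨Or.inl (by linarith), Or.inr (by linarith)⟩)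
  | exact Or.inr (Or.inl ⟨Or.inr (by linarith), Or.inl (by linarith)⟩)
  | exact Or.inr (Or.inl ⟨Or.inr (by linarith), Or.inr (by linarith)⟩)
  | exact Or.inr (Or.inr ⟨Or.inl (by linarith), Or.inl (by linarith)⟩)
  | exact Or.inr (Or.inr ⟨Or.inl (by linarith), Or.inr (by linarith)⟩)
  | exact Or.inr (Or.inr ⟨Or.inr (by linarith), Or.inl (by linarith)⟩)
  | exact Or.inr (Or.inr ⟨Or.inr (by linarith), Or.inr (by linarith)⟩)

lemma LexLt.le1 {a b : ℝ × ℝ} (h : LexLt a b) : a.1 ≤ b.1 :=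
  h.elim le_of_lt (fun h => le_of_eq h.1)

/-- No enclosing triangle (from the proof of Theorem 3): in the lexicographic
ranking, if some further center `c m` lies in the closed triangle spanned by
`c i, c j, c k` (with `i < j < k`), then at least one of the pairs
`{S_i,S_j}`, `{S_j,S_k}`, `{S_i,S_k}` is not a visibility edge. -/
theorem stmt_9 {n : ℕ} (c : Fin n → ℝ × ℝ)
    (hlex : ∀ i j : Fin n, i < j → LexLt (c i) (c j))
    (i j k m : Fin n) (hij : i < j) (hjk : j < k)
    (hmi : m ≠ i) (hmj : m ≠ j) (hmk : m ≠ k)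
    (hm : c m ∈ convexHull ℝ ({c i, c j, c k} : Set (ℝ × ℝ))) :
    ¬ Sees c i j ∨ ¬ Sees c j k ∨ ¬ Sees c i k := by
  obtain ⟨α, β, γ, hα, hβ, hγ, hsum, hx, hy⟩ := hullCoeffs _ _ _ _ hm
  have hik : i < k := hij.trans hjk
  have xij : (c i).1 ≤ (c j).1 := (hlex i j hij).le1
  have xjk : (c j).1 ≤ (c k).1 := (hlex j k hjk).le1
  have xik : (c i).1 ≤ (c k).1 := xij.trans xjk
  -- combo-based x bounds
  have ex1 : (c m).1 - (c i).1 = β * ((c j).1 - (c i).1) + γ * ((c k).1 - (c i).1) := by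
    linear_combination hx + (c i).1 * hsum
  have ex2 : (c k).1 - (c m).1 = α * ((c k).1 - (c i).1) + β * ((c k).1 - (c j).1) := by
    linear_combination -hx - (c k).1 * hsum
  have xim : (c i).1 ≤ (c m).1 := by
    nlinarith [mul_nonneg hβ (by linarith : (0:ℝ) ≤ (c j).1 - (c i).1),
      mul_nonneg hγ (by linarith : (0:ℝ) ≤ (c k).1 - (c i).1)]
  have xmk : (c m).1 ≤ (c k).1 := by
    nlinarith [mul_nonneg hα (by linarith : (0:ℝ) ≤ (c k).1 - (c i).1),
      mul_nonneg hβ (by linarith : (0:ℝ) ≤ (c k).1 - (c j).1)]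
  -- m is ranked strictly between i and k
  have hnotmi : ¬ m < i := by
    intro hmlt
    rcases hlex m i hmlt with h | ⟨he, hylt⟩
    · linarith
    · have e0 : β * ((c j).1 - (c i).1) + γ * ((c k).1 - (c i).1) = 0 := by linarith
      have p1 : 0 ≤ β * ((c j).1 - (c i).1) := mul_nonneg hβ (by linarith)
      have p2 : 0 ≤ γ * ((c k).1 - (c i).1) := mul_nonneg hγ (by linarith)
      have z1 : β * ((c j).1 - (c i).1) = 0 := by linarith
      have z2 : γ * ((c k).1 - (c i).1) = 0 := by linarith
      have ey : (c m).2 - (c i).2 = β * ((c j).2 - (c i).2) + γ * ((c k).2 - (c i).2) := by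
        linear_combination hy + (c i).2 * hsum
      have t1 : 0 ≤ β * ((c j).2 - (c i).2) := by
        rcases hlex i j hij with h' | ⟨he', hy'⟩
        · have : β = 0 := by
            rcases mul_eq_zero.1 z1 with h0|h0
            · exact h0
            · linarith
          rw [this, zero_mul]
        · exact mul_nonneg hβ (by linarith)
      have t2 : 0 ≤ γ * ((c k).2 - (c i).2) := by
        rcases hlex i k hik with h' | ⟨he', hy'⟩
        · have : γ = 0 := by
            rcases mul_eq_zero.1 z2 with h0|h0
            · exact h0
            · linarith
          rw [this, zero_mul]
        · exact mul_nonneg hγ (by linarith)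
      linarith
  have hnotkm : ¬ k < m := by
    intro hmlt
    rcases hlex k m hmlt with h | ⟨he, hylt⟩
    · linarith
    · have e0 : α * ((c k).1 - (c i).1) + β * ((c k).1 - (c j).1) = 0 := by linarith
      have p1 : 0 ≤ α * ((c k).1 - (c i).1) := mul_nonneg hα (by linarith)
      have p2 : 0 ≤ β * ((c k).1 - (c j).1) := mul_nonneg hβ (by linarith)
      have z1 : α * ((c k).1 - (c i).1) = 0 := by linarith
      have z2 : β * ((c k).1 - (c j).1) = 0 := by linarith
      have ey : (c k).2 - (c m).2 = α * ((c k).2 - (c i).2) + β * ((c k).2 - (c j).2) := by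
        linear_combination -hy - (c k).2 * hsum
      have t1 : 0 ≤ α * ((c k).2 - (c i).2) := by
        rcases hlex i k hik with h' | ⟨he', hy'⟩
        · have : α = 0 := by
            rcases mul_eq_zero.1 z1 with h0|h0
            · exact h0
            · linarith
          rw [this, zero_mul]
        · exact mul_nonneg hα (by linarith)
      have t2 : 0 ≤ β * ((c k).2 - (c j).2) := by
        rcases hlex j k hjk with h' | ⟨he', hy'⟩
        · have : β = 0 := by
            rcases mul_eq_zero.1 z2 with h0|h0
            · exact h0
            · linarith
          rw [this, zero_mul]
        · exact mul_nonneg hβ (by linarith)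
      linarith
  have him : i < m := hmi.lt_or_gt.resolve_left hnotmi
  have hmk' : m < k := hmk.lt_or_gt.resolve_right hnotkm
  -- y bounds from the convex combination
  obtain ⟨hlb, hub⟩ := comboBounds α β γ (c i).2 (c j).2 (c k).2 (c m).2 hα hβ hγ hsum hy
  rcases hmj.lt_or_gt with hmj' | hjm'
  · -- i < m < j
    have xmj : (c m).1 ≤ (c j).1 := (hlex m j hmj').le1
    rcases ydisj (c i).2 (c j).2 (c k).2 (c m).2 hlb hub with h | h | h
    · exact Or.inl (blocks c i m j him hmj'
        ⟨min_le_iff.2 (Or.inl xim), le_max_iff.2 (Or.inr xmj),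
         min_le_iff.2 h.1, le_max_iff.2 h.2⟩)
    · exact Or.inr (Or.inr (blocks c i m k him hmk'
        ⟨min_le_iff.2 (Or.inl xim), le_max_iff.2 (Or.inr xmk),
         min_le_iff.2 h.1, le_max_iff.2 h.2⟩))
    · exact Or.inr (Or.inr (blocks c i j k hij hjk
        ⟨min_le_iff.2 (Or.inl xij), le_max_iff.2 (Or.inr xjk),
         min_le_iff.2 h.1, le_max_iff.2 h.2⟩))
  · -- j < m < k
    have xjm : (c j).1 ≤ (c m).1 := (hlex j m hjm').le1
    rcases ydisj (c k).2 (c j).2 (c i).2 (c m).2 (by tauto) (by tauto) with h | h | h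
    · exact Or.inr (Or.inl (blocks c j m k hjm' hmk'
        ⟨min_le_iff.2 (Or.inl xjm), le_max_iff.2 (Or.inr xmk),
         min_le_iff.2 h.1.symm, le_max_iff.2 h.2.symm⟩))
    · exact Or.inr (Or.inr (blocks c i m k him hmk'
        ⟨min_le_iff.2 (Or.inl xim), le_max_iff.2 (Or.inr xmk),
         min_le_iff.2 h.1.symm, le_max_iff.2 h.2.symm⟩))
    · exact Or.inr (Or.inr (blocks c i j k hij hjk
        ⟨min_le_iff.2 (Or.inl xij), le_max_iff.2 (Or.inr xjk),
         min_le_iff.2 h.1.symm, le_max_iff.2 h.2.symm⟩))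
end

section
/- (Theorem 3) Let n ≥ 4 and let ρ_lex = (S_1, …, S_n) be the lexicographic ranking of n unit squares with pairwise distinct centers c_1 < c_2 < ⋯ < c_n (lexicographically). Then the visibility graph G(ρ_lex) has at most 3n − 7 edges, i.e. the number of pairs (i, k) with i < k such that S_i sees S_k under ρ_lex is at most 3n − 7. -/
namespace SquareVisibility

variable {ι : Type*}

def heightKey (y : ι → ℝ) (m : ι) : ℝ ×ₗ ι := toLex (y m, m)

lemma heightKey_injective (y : ι → ℝ) : Function.Injective (heightKey y) :=
  fun _ _ h => congrArg Prod.snd (toLex.injective h)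

open Finset in
lemma exists_two_least_two_greatest {α : Type*} [Fintype ι] [LinearOrder α] {f : ι → α}
    (hf : Function.Injective f) (hcard : 4 ≤ Fintype.card ι) :
    ∃ F S K L, f F < f S ∧ f S < f K ∧ f K < f L ∧ (∀ m, f F ≤ f m) ∧ (∀ m ≠ F, f S ≤ f m) ∧
      (∀ m ≠ L, f m ≤ f K) ∧ ∀ m, f m ≤ f L := by
  classical
  have : Nonempty ι := Fintype.card_pos_iff.1 (by omega)
  have erase_nonempty (a : ι) : (univ.erase a).Nonempty := by
    rw [← card_pos, card_erase_of_mem (mem_univ a), card_univ]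
    omega
  obtain ⟨F, hF⟩ := Finite.exists_min f
  obtain ⟨L, hL⟩ := Finite.exists_max f
  obtain ⟨S, hSF, hS⟩ := (univ.erase F).exists_min_image f (erase_nonempty F)
  obtain ⟨K, hKL, hK⟩ := (univ.erase L).exists_max_image f (erase_nonempty L)
  obtain ⟨m, -, hm⟩ := exists_mem_notMem_of_card_lt_card (s := {F, S, L}) (t := univ)
    (by rw [card_univ]; exact (card_le_three).trans_lt (by omega))
  simp only [mem_insert, mem_singleton, not_or] at hm
  simp only [mem_erase, mem_univ, and_true] at hSF hKL hS hK
  refine ⟨F, S, K, L, (hF S).lt_of_ne (hf.ne (Ne.symm hSF)), ?_,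
    (hL K).lt_of_ne (hf.ne hKL), hF, hS, hK, hL⟩
  calc f S < f m := (hS m hm.1).lt_of_ne (hf.ne (Ne.symm hm.2.1))
    _ ≤ f K := hK m hm.2.2

variable [LinearOrder ι]

lemma heightKey_lt_of_lt {y : ι → ℝ} {a b : ι} (h : y a < y b) :
    heightKey y a < heightKey y b :=
  Prod.Lex.toLex_lt_toLex.2 (Or.inl h)

lemma le_of_heightKey_lt {y : ι → ℝ} {a b : ι} (h : heightKey y a < heightKey y b) :
    y a ≤ y b :=
  (Prod.Lex.toLex_lt_toLex'.1 h).1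

def IntervalSeesAt (y : ι → ℝ) (i k : ι) (t : ℝ) : Prop :=
  |t - y i| ≤ 1 ∧ |t - y k| ≤ 1 ∧ ∀ j, i < j → j < k → 1 < |t - y j|

def visibilityEdges (y : ι → ℝ) : Set (ι × ι) :=
  {p | p.1 < p.2 ∧ ∃ t, IntervalSeesAt y p.1 p.2 t}

section IntervalSeesAt

variable {y : ι → ℝ} {i j k i' k' : ι} {s t : ℝ}

lemma IntervalSeesAt.lower (h : IntervalSeesAt y i k t) (hs : max (y i) (y k) - 1 ≤ s)
    (hst : s ≤ t) (hbelow : ∀ j, i < j → j < k → y j < y i → y j < y k → y j + 1 < s) :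
    IntervalSeesAt y i k s := by
  obtain ⟨hi, hk, hb⟩ := h
  rw [abs_le] at hi hk
  rw [sub_le_iff_le_add, max_le_iff] at hs
  refine ⟨abs_le.2 ⟨by linarith, by linarith⟩, abs_le.2 ⟨by linarith, by linarith⟩,
    fun j hij hjk => ?_⟩
  rcases lt_abs.1 (hb j hij hjk) with hj | hj
  · exact lt_abs.2 (Or.inl (by linarith [hbelow j hij hjk (by linarith) (by linarith)]))
  · exact lt_abs.2 (Or.inr (by linarith))

lemma IntervalSeesAt.add_one_lt (h : IntervalSeesAt y i k t) (hij : i < j) (hjk : j < k)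
    (hj : y j < y i) : y j + 1 < t := by
  have hi := (abs_le.1 h.1).1
  rcases lt_abs.1 (h.2.2 j hij hjk) with h' | h' <;> linarith

/-- Otherwise an endpoint of one pair lies strictly inside the other and blocks the height `s`. -/
lemma IntervalSeesAt.eq_of_lt (h : IntervalSeesAt y i k s) (h' : IntervalSeesAt y i' k' s)
    (hik' : i < k') (hi'k : i' < k) : i = i' ∧ k = k' := by
  have blocks {a b c : ι} (hac : IntervalSeesAt y a c s) (hb : |s - y b| ≤ 1)
      (hab : a < b) (hbc : b < c) : False := (hac.2.2 b hab hbc).not_ge hb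
  constructor
  · rcases lt_trichotomy i i' with hlt | heq | hgt
    · exact (blocks h h'.1 hlt hi'k).elim
    · exact heq
    · exact (blocks h' h.1 hgt hik').elim
  · rcases lt_trichotomy k k' with hlt | heq | hgt
    · exact (blocks h' h.2.1 hi'k hlt).elim
    · exact heq
    · exact (blocks h h'.2.1 hik' hgt).elim

lemma IntervalSeesAt.exists_below (h : IntervalSeesAt y i k t)
    (hbot : ¬ IntervalSeesAt y i k (max (y i) (y k) - 1)) :
    ∃ j, i < j ∧ j < k ∧ y j < y i ∧ y j < y k ∧ max (y i) (y k) - 1 ≤ y j + 1 := by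
  by_contra! hnone
  refine hbot (h.lower le_rfl ?_ fun j hij hjk hji hjk' => hnone j hij hjk hji hjk')
  have := abs_le.1 h.1
  have := abs_le.1 h.2.1
  rw [sub_le_iff_le_add, max_le_iff]
  constructor <;> linarith

end IntervalSeesAt

/-- The slots no visible pair is charged to, when `F, S` are the two lowest and `K, L` the two
highest intervals for `heightKey`, and `B`, `T` the first and last index. -/
def deadSlots (F S K L T B : ι) : Finset (ι × Option Bool) :=
  {(F, some true), (F, some false), (S, some (decide (F < S))), (K, none), (L, none),
    (T, some true), (T, none), (B, some false), (B, none)}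

lemma seven_le_card_deadSlots {F S K L T B : ι} (hFS : F ≠ S) (hFK : F ≠ K) (hFL : F ≠ L)
    (hSK : S ≠ K) (hSL : S ≠ L) (hKL : K ≠ L) (hTB : T ≠ B) :
    7 ≤ (deadSlots F S K L T B).card := by
  set core : Finset (ι × Option Bool) :=
    {(F, some true), (F, some false), (S, some (decide (F < S))), (K, none), (L, none)}
  have hcore : core.card = 5 := by
    simp [core, Finset.card_insert_of_notMem, hFS, hFK, hFL, hSK, hSL, hKL]
  -- As `K, L ∉ {F, S}`, every vertex `v` has a slot outside `core`: `(v, some c)` if `v ∈ {K, L}`.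
  have fresh (v : ι) (c : Bool) : ∃ x ∉ core, x.1 = v ∧ (x = (v, some c) ∨ x = (v, none)) := by
    by_cases hv : v = K ∨ v = L
    · refine ⟨(v, some c), ?_, rfl, Or.inl rfl⟩
      rcases hv with rfl | rfl <;> simp [core, hFK.symm, hSK.symm, hFL.symm, hSL.symm]
    · refine ⟨(v, none), ?_, rfl, Or.inr rfl⟩
      push Not at hv
      simp [core, hv.1, hv.2]
  obtain ⟨xT, hxT, hxT₁, hxT₂⟩ := fresh T true
  obtain ⟨xB, hxB, hxB₁, hxB₂⟩ := fresh B false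
  have hne : xT ≠ xB := fun h => hTB (hxT₁ ▸ hxB₁ ▸ congrArg Prod.fst h)
  calc 7 = (insert xT (insert xB core)).card := by
        rw [Finset.card_insert_of_notMem (by simp [hne, hxT]), Finset.card_insert_of_notMem hxB,
          hcore]
    _ ≤ _ := by
        refine Finset.card_le_card (Finset.insert_subset ?_ (Finset.insert_subset ?_ ?_))
        · rcases hxT₂ with rfl | rfl <;> simp [deadSlots]
        · rcases hxB₂ with rfl | rfl <;> simp [deadSlots]
        · intro x hx
          simp only [core, Finset.mem_insert, Finset.mem_singleton] at hx ⊢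
          rcases hx with rfl | rfl | rfl | rfl | rfl <;> simp [deadSlots]

variable [Fintype ι]

noncomputable def belowBlockers (y : ι → ℝ) (i k : ι) : Finset ι :=
  {j | i < j ∧ j < k ∧ y j < y i ∧ y j < y k}

noncomputable def highestBelowBlocker (y : ι → ℝ) (i k : ι) : ι :=
  if h : (belowBlockers y i k).Nonempty then (Finset.exists_max_image _ y h).choose else i

lemma highestBelowBlocker_spec {y : ι → ℝ} {i k : ι} (h : (belowBlockers y i k).Nonempty) :
    highestBelowBlocker y i k ∈ belowBlockers y i k ∧
      ∀ j ∈ belowBlockers y i k, y j ≤ y (highestBelowBlocker y i k) := by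
  rw [highestBelowBlocker, dif_pos h]
  exact (Finset.exists_max_image _ y h).choose_spec

/-- The slot charged to a visible pair: `some true` (resp. `some false`) at its left (resp. right)
endpoint when that endpoint is the higher one and the bottom of the two intervals' intersection
is visible, and otherwise `none` at the highest interval between them lying below both. -/
noncomputable def charge (y : ι → ℝ) (p : ι × ι) : ι × Option Bool :=
  open Classical in
  if IntervalSeesAt y p.1 p.2 (max (y p.1) (y p.2) - 1) then
    if heightKey y p.2 < heightKey y p.1 then (p.1, some true) else (p.2, some false)
  else (highestBelowBlocker y p.1 p.2, none)

lemma charge_cases {y : ι → ℝ} {i k : ι} {t : ℝ} (hik : i < k) (ht : IntervalSeesAt y i k t) :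
    (charge y (i, k) = (i, some true) ∧ heightKey y k < heightKey y i ∧
        IntervalSeesAt y i k (y i - 1)) ∨
    (charge y (i, k) = (k, some false) ∧ heightKey y i < heightKey y k ∧
        IntervalSeesAt y i k (y k - 1)) ∨
    ∃ j, charge y (i, k) = (j, none) ∧ i < j ∧ j < k ∧ y j < y i ∧ y j < y k ∧
        ∀ s, y j + 1 < s → s ≤ t → IntervalSeesAt y i k s := by
  by_cases hbot : IntervalSeesAt y i k (max (y i) (y k) - 1)
  · by_cases hkey : heightKey y k < heightKey y i
    · have hmax := max_eq_left (le_of_heightKey_lt hkey)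
      exact Or.inl ⟨by simp [charge, hbot, hkey], hkey, hmax ▸ hbot⟩
    · have hkey' : heightKey y i < heightKey y k :=
        lt_of_le_of_ne (not_lt.1 hkey) ((heightKey_injective y).ne hik.ne)
      have hmax := max_eq_right (le_of_heightKey_lt hkey')
      exact Or.inr (Or.inl ⟨by simp [charge, hbot, hkey], hkey', hmax ▸ hbot⟩)
  · obtain ⟨j₀, hij₀, hj₀k, hj₀i, hj₀k', hbot₀⟩ := ht.exists_below hbot
    have hne : (belowBlockers y i k).Nonempty :=
      ⟨j₀, by simp [belowBlockers, hij₀, hj₀k, hj₀i, hj₀k']⟩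
    obtain ⟨hmem, hmax⟩ := highestBelowBlocker_spec hne
    simp only [belowBlockers, Finset.mem_filter, Finset.mem_univ, true_and] at hmem hmax
    obtain ⟨hij, hjk, hji, hjk'⟩ := hmem
    refine Or.inr (Or.inr ⟨_, by simp [charge, hbot], hij, hjk, hji, hjk',
      fun s hs hst => ht.lower ?_ hst fun j hij hjk hji hjk' => ?_⟩)
    · linarith [hmax j₀ ⟨hij₀, hj₀k, hj₀i, hj₀k'⟩]
    · linarith [hmax j ⟨hij, hjk, hji, hjk'⟩]

lemma charge_injOn (y : ι → ℝ) : Set.InjOn (charge y) (visibilityEdges y) := by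
  rintro ⟨i, k⟩ ⟨hik, t, ht⟩ ⟨i', k'⟩ ⟨hik', t', ht'⟩ heq
  dsimp only at hik ht hik' ht'
  suffices i = i' ∧ k = k' by rw [this.1, this.2]
  rcases charge_cases hik ht with ⟨hc, -, hs⟩ | ⟨hc, -, hs⟩ | ⟨j, hc, hij, hjk, hji, -, hs⟩ <;>
    rcases charge_cases hik' ht' with ⟨hc', -, hs'⟩ | ⟨hc', -, hs'⟩ |
      ⟨j', hc', hij', hjk', hji', -, hs'⟩ <;>
    rw [hc, hc'] at heq <;> simp only [Prod.mk.injEq, reduceCtorEq, Option.some.injEq,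
      Bool.true_eq_false, Bool.false_eq_true, and_false, and_true] at heq
  · subst heq
    exact hs.eq_of_lt hs' hik' hik
  · subst heq
    exact hs.eq_of_lt hs' hik hik'
  · subst heq
    -- both pairs are seen at height `min t t'`, just above their common highest below-blocker
    have ht'j := ht'.add_one_lt hij' hjk' hji'
    have htj := ht.add_one_lt hij hjk hji
    exact (hs _ (lt_min htj ht'j) (min_le_left t t')).eq_of_lt
      (hs' _ (lt_min htj ht'j) (min_le_right t t')) (hij.trans hjk') (hij'.trans hjk)

lemma charge_notMem_deadSlots {y : ι → ℝ} {F S K L T B : ι}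
    (hF : ∀ m, heightKey y F ≤ heightKey y m) (hS : ∀ m ≠ F, heightKey y S ≤ heightKey y m)
    (hK : ∀ m ≠ L, heightKey y m ≤ heightKey y K) (hL : ∀ m, heightKey y m ≤ heightKey y L)
    (hT : ∀ m, m ≤ T) (hB : ∀ m, B ≤ m) {p : ι × ι} (hp : p ∈ visibilityEdges y) :
    charge y p ∉ deadSlots F S K L T B := by
  obtain ⟨i, k⟩ := p
  obtain ⟨hik, t, ht⟩ := hp
  simp only [deadSlots, Finset.mem_insert, Finset.mem_singleton, not_or]
  rcases charge_cases hik ht with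
    ⟨hc, hkey, -⟩ | ⟨hc, hkey, -⟩ | ⟨j, hc, hij, hjk, hji, hjk', -⟩ <;> rw [hc] <;>
    simp only [Prod.mk.injEq, reduceCtorEq, Option.some.injEq, Bool.true_eq_false,
      Bool.false_eq_true, and_false, and_true, not_false_eq_true, true_and]
  · refine ⟨?_, ?_, ?_⟩
    · rintro rfl
      exact (hF k).not_gt hkey
    · rintro ⟨rfl, hFS⟩
      have hkF : k = F := by_contra fun h => (hS k h).not_gt hkey
      exact (hik.trans_eq hkF).not_gt (of_decide_eq_true hFS.symm)
    · rintro rfl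
      exact (hT k).not_gt hik
  · refine ⟨?_, ?_, ?_⟩
    · rintro rfl
      exact (hF i).not_gt hkey
    · rintro ⟨rfl, hFS⟩
      have hiF : i = F := by_contra fun h => (hS i h).not_gt hkey
      exact of_decide_eq_false hFS.symm (hiF ▸ hik)
    · rintro rfl
      exact (hB i).not_gt hik
  · have hji' := heightKey_lt_of_lt hji
    have hjk'' := heightKey_lt_of_lt hjk'
    refine ⟨?_, ?_, ?_, ?_⟩
    · rintro rfl
      by_cases hiL : i = L
      · exact (hK k (hiL ▸ hik.ne')).not_gt hjk''
      · exact (hK i hiL).not_gt hji'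
    · rintro rfl
      exact (hL i).not_gt hji'
    · rintro rfl
      exact (hT k).not_gt hjk
    · rintro rfl
      exact (hB i).not_gt hij

theorem ncard_visibilityEdges_le (y : ι → ℝ) (hcard : 4 ≤ Fintype.card ι) :
    (visibilityEdges y).ncard ≤ 3 * Fintype.card ι - 7 := by
  obtain ⟨F, S, K, L, hFS, hSK, hKL, hF, hS, hK, hL⟩ :=
    exists_two_least_two_greatest (heightKey_injective y) hcard
  have hne {a b : ι} (h : heightKey y a < heightKey y b) : a ≠ b := fun hab => h.ne (hab ▸ rfl)
  have : Nonempty ι := Fintype.card_pos_iff.1 (by omega)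
  obtain ⟨T, hT⟩ := Finite.exists_max (id : ι → ι)
  obtain ⟨B, hB⟩ := Finite.exists_min (id : ι → ι)
  have hTB : T ≠ B := by
    obtain ⟨a, b, hab⟩ := Fintype.exists_pair_of_one_lt_card (show 1 < Fintype.card ι by omega)
    rintro rfl
    exact hab (((hT a).antisymm (hB a)).trans ((hT b).antisymm (hB b)).symm)
  have h7 := seven_le_card_deadSlots (hne hFS) (hne (hFS.trans hSK))
    (hne (hFS.trans (hSK.trans hKL))) (hne hSK) (hne (hSK.trans hKL)) (hne hKL) hTB
  calc (visibilityEdges y).ncard ≤ (↑(deadSlots F S K L T B)ᶜ : Set (ι × Option Bool)).ncard :=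
        Set.ncard_le_ncard_of_injOn _ (fun p hp => by
          simpa using charge_notMem_deadSlots hF hS hK hL hT hB hp) (charge_injOn y)
    _ = 3 * Fintype.card ι - (deadSlots F S K L T B).card := by
        rw [Set.ncard_coe_finset, Finset.card_compl]
        simp [mul_comm]
    _ ≤ 3 * Fintype.card ι - 7 := by omega

end SquareVisibility

open SquareVisibility

lemma Sees.exists_intervalSeesAt {n : ℕ} {c : Fin n → ℝ × ℝ} (hx : Monotone fun m => (c m).1)
    {i k : Fin n} (h : Sees c i k) : ∃ t, IntervalSeesAt (fun m => (c m).2) i k t := by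
  obtain ⟨p, ⟨hpi, hpk⟩, hblock⟩ := h
  simp only [UnitSq, Metric.mem_closedBall, Prod.dist_eq, Real.dist_eq, max_le_iff]
    at hpi hpk hblock
  refine ⟨p.2, hpi.2, hpk.2, fun j hij hjk => lt_of_not_ge fun hj => hblock j hij hjk ⟨?_, hj⟩⟩
  have := abs_le.1 hpi.1
  have := abs_le.1 hpk.1
  have := hx hij.le
  have := hx hjk.le
  exact abs_le.2 ⟨by linarith, by linarith⟩

/-- Theorem 3: for `n ≥ 4`, the visibility graph of the lexicographic ranking
of `n` unit squares has at most `3n - 7` edges. -/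
theorem stmt_10 {n : ℕ} (hn : 4 ≤ n) (c : Fin n → ℝ × ℝ)
    (hlex : ∀ i j : Fin n, i < j → LexLt (c i) (c j)) :
    {p : Fin n × Fin n | p.1 < p.2 ∧ Sees c p.1 p.2}.ncard ≤ 3 * n - 7 := by
  have hx : Monotone fun m => (c m).1 :=
    monotone_iff_forall_lt.2 fun i j hij => (hlex i j hij).elim le_of_lt fun h => h.1.le
  calc _ ≤ (visibilityEdges fun m => (c m).2).ncard :=
        Set.ncard_le_ncard fun p hp => ⟨hp.1, hp.2.exists_intervalSeesAt hx⟩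
    _ ≤ 3 * n - 7 := by
        simpa using ncard_visibilityEdges_le (fun m => (c m).2) (by simpa using hn)
end

section
/- (Lower bound) For every n ≥ 4 there exists a set of n unit squares with pairwise distinct centers in ℝ² such that for every ranking ρ of these squares, the visibility graph G(ρ) has at least 3n − 7 edges. -/
namespace Stmt12Aux

/-- height value: 0 ↦ 0, m+3 ↦ m+3, middle v ↦ m+3-v -/
def yv (m v : ℕ) : ℕ := if v = 0 then 0 else if v = m + 3 then m + 3 else m + 3 - v

noncomputable def ctr (m : ℕ) (k : Fin (m + 4)) : ℝ × ℝ :=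
  ((k : ℝ) / (m + 4), (yv m k : ℝ) / (m + 4))

lemma mem_unitSq {c p : ℝ × ℝ} : p ∈ UnitSq c ↔ |p.1 - c.1| ≤ 1 ∧ |p.2 - c.2| ≤ 1 := by
  simp [UnitSq, Metric.mem_closedBall, Prod.dist_eq, Real.dist_eq, max_le_iff]

variable {m : ℕ}

lemma hN : (0:ℝ) < (m:ℝ) + 4 := by positivity

lemma Dlt {a b : ℕ} (h : a < b) : (a:ℝ)/((m:ℝ)+4) < (b:ℝ)/((m:ℝ)+4) := by
  have h2 : (a:ℝ) < b := by exact_mod_cast h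
  exact div_lt_div_of_pos_right h2 hN

lemma D0 (a : ℕ) : (0:ℝ) ≤ (a:ℝ)/((m:ℝ)+4) := by positivity

lemma D1 {a : ℕ} (h : a ≤ m+3) : (a:ℝ)/((m:ℝ)+4) < 1 := by
  rw [div_lt_one hN]
  have : (a:ℝ) ≤ (m:ℝ)+3 := by exact_mod_cast h
  linarith

end Stmt12Aux

namespace Stmt12Aux

lemma yv_zero (m : ℕ) : yv m 0 = 0 := by simp [yv]
lemma yv_last (m : ℕ) : yv m (m+3) = m+3 := by simp [yv]
lemma yv_mid (m : ℕ) {v : ℕ} (h1 : 1 ≤ v) (h2 : v ≤ m+2) : yv m v = m+3-v := by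
  unfold yv; rw [if_neg (by omega), if_neg (by omega)]

lemma notMem_x {c p : ℝ × ℝ} (h : 1 < |p.1 - c.1|) : p ∉ UnitSq c :=
  fun hm => absurd (mem_unitSq.mp hm).1 (not_le.mpr h)
lemma notMem_y {c p : ℝ × ℝ} (h : 1 < |p.2 - c.2|) : p ∉ UnitSq c :=
  fun hm => absurd (mem_unitSq.mp hm).2 (not_le.mpr h)

variable {m : ℕ}

/-- W1 : witness point for the pair (square 0, middle square u); avoids all other squares. -/
lemma W1 (u : Fin (m+4)) (h1 : 1 ≤ u.val) (h2 : u.val ≤ m+2) :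
    ∃ p : ℝ × ℝ, p ∈ UnitSq (ctr m ⟨0, by omega⟩) ∧ p ∈ UnitSq (ctr m u) ∧
      ∀ b : Fin (m+4), b.val ≠ 0 → b ≠ u → p ∉ UnitSq (ctr m b) := by
  have hyu : yv m u.val = m+3-u.val := yv_mid m h1 h2
  refine ⟨(((u:ℕ):ℝ)/((m:ℝ)+4) - 1, ((yv m u : ℕ):ℝ)/((m:ℝ)+4) - 1), ?_, ?_, ?_⟩
  · have a1 := @D0 m u.val
    have a2 := @D1 m u.val (by omega)
    have b1 := @D0 m (yv m u.val)
    have b2 := @D1 m (yv m u.val) (by omega)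
    rw [mem_unitSq]
    simp only [ctr, yv_zero, Nat.cast_zero, zero_div]
    constructor
    · rw [abs_le]; constructor <;> simp <;> linarith
    · rw [abs_le]; constructor <;> simp <;> linarith
  · rw [mem_unitSq]
    simp only [ctr]
    constructor
    · rw [abs_le]; constructor <;> ring_nf <;> norm_num
    · rw [abs_le]; constructor <;> ring_nf <;> norm_num
  · intro b hb0 hbu
    rcases lt_or_gt_of_ne (fun h => hbu (Fin.ext h)) with hlt | hgt
    · -- b.val < u.val : b is a middle with larger y; escape in y
      have hb1 : 1 ≤ b.val := by omega
      have hb2 : b.val ≤ m+2 := by omega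
      have hyb : yv m b.val = m+3-b.val := yv_mid m hb1 hb2
      have key : ((yv m u.val:ℕ):ℝ)/((m:ℝ)+4) < ((yv m b.val:ℕ):ℝ)/((m:ℝ)+4) :=
        Dlt (by omega)
      apply notMem_y
      simp only [ctr]
      rw [lt_abs]; right; linarith
    · -- u.val < b.val : escape in x
      have key : ((u.val:ℕ):ℝ)/((m:ℝ)+4) < ((b.val:ℕ):ℝ)/((m:ℝ)+4) := Dlt hgt
      apply notMem_x
      simp only [ctr]
      rw [lt_abs]; right; linarith

end Stmt12Aux

namespace Stmt12Aux

variable {m : ℕ}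

/-- W2 : witness for (middle u, square m+3); avoids all other squares. -/
lemma W2 (u : Fin (m+4)) (h1 : 1 ≤ u.val) (h2 : u.val ≤ m+2) :
    ∃ p : ℝ × ℝ, p ∈ UnitSq (ctr m u) ∧ p ∈ UnitSq (ctr m ⟨m+3, by omega⟩) ∧
      ∀ b : Fin (m+4), b.val ≠ m+3 → b ≠ u → p ∉ UnitSq (ctr m b) := by
  have hyu : yv m u.val = m+3-u.val := yv_mid m h1 h2
  refine ⟨(((u:ℕ):ℝ)/((m:ℝ)+4) + 1, ((yv m u : ℕ):ℝ)/((m:ℝ)+4) + 1), ?_, ?_, ?_⟩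
  · rw [mem_unitSq]
    simp only [ctr]
    constructor
    · rw [abs_le]; constructor <;> ring_nf <;> norm_num
    · rw [abs_le]; constructor <;> ring_nf <;> norm_num
  · have a1 : ((u.val:ℕ):ℝ)/((m:ℝ)+4) < ((m+3:ℕ):ℝ)/((m:ℝ)+4) := Dlt (by omega)
    have a2 := @D1 m (m+3) (by omega)
    have b1 : ((yv m u.val:ℕ):ℝ)/((m:ℝ)+4) < ((m+3:ℕ):ℝ)/((m:ℝ)+4) := Dlt (by omega)
    have c1 := @D0 m u.val
    have c2 := @D0 m (yv m u.val)
    rw [mem_unitSq]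
    simp only [ctr, yv_last]
    push_cast at a1 a2 b1 c1 c2 ⊢
    constructor
    · rw [abs_le]; constructor <;> linarith
    · rw [abs_le]; constructor <;> linarith
  · intro b hb3 hbu
    rcases lt_or_gt_of_ne (fun h => hbu (Fin.ext h)) with hlt | hgt
    · -- b.val < u.val : escape in x
      have key : ((b.val:ℕ):ℝ)/((m:ℝ)+4) < ((u.val:ℕ):ℝ)/((m:ℝ)+4) := Dlt hlt
      apply notMem_x
      simp only [ctr]
      rw [lt_abs]; left; linarith
    · -- u.val < b.val, b ≠ last : b middle with smaller y; escape in y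
      have hb2 : b.val ≤ m+2 := by omega
      have hyb : yv m b.val = m+3-b.val := yv_mid m (by omega) hb2
      have key : ((yv m b.val:ℕ):ℝ)/((m:ℝ)+4) < ((yv m u.val:ℕ):ℝ)/((m:ℝ)+4) :=
        Dlt (by omega)
      apply notMem_y
      simp only [ctr]
      rw [lt_abs]; left; linarith

/-- W3 : NE-corner witness for two middles; avoids square 0. -/
lemma W3 (u v : Fin (m+4)) (h1 : 1 ≤ u.val) (huv : u.val < v.val) (h2 : v.val ≤ m+2) :
    ∃ p : ℝ × ℝ, p ∈ UnitSq (ctr m u) ∧ p ∈ UnitSq (ctr m v) ∧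
      p ∉ UnitSq (ctr m ⟨0, by omega⟩) := by
  have hyu : yv m u.val = m+3-u.val := yv_mid m h1 (by omega)
  have hyv : yv m v.val = m+3-v.val := yv_mid m (by omega) h2
  have hx : ((u.val:ℕ):ℝ)/((m:ℝ)+4) < ((v.val:ℕ):ℝ)/((m:ℝ)+4) := Dlt huv
  have hy : ((yv m v.val:ℕ):ℝ)/((m:ℝ)+4) < ((yv m u.val:ℕ):ℝ)/((m:ℝ)+4) := Dlt (by omega)
  have hx1 := @D1 m v.val (by omega)
  have hy1 := @D1 m (yv m u.val) (by omega)
  have hx0 := @D0 m u.val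
  have hy0 := @D0 m (yv m v.val)
  have hu0 : (0:ℝ) < ((u.val:ℕ):ℝ)/((m:ℝ)+4) := by
    have := @Dlt m 0 u.val (by omega)
    rwa [Nat.cast_zero, zero_div] at this
  refine ⟨(((u:ℕ):ℝ)/((m:ℝ)+4) + 1, ((yv m v : ℕ):ℝ)/((m:ℝ)+4) + 1), ?_, ?_, ?_⟩
  · rw [mem_unitSq]; simp only [ctr]
    constructor
    · rw [abs_le]; constructor <;> ring_nf <;> norm_num
    · rw [abs_le]; constructor <;> linarith
  · rw [mem_unitSq]; simp only [ctr]
    constructor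
    · rw [abs_le]; constructor <;> linarith
    · rw [abs_le]; constructor <;> ring_nf <;> norm_num
  · apply notMem_x
    simp only [ctr]
    rw [lt_abs]; left; simp; linarith

/-- W4 : SW-corner witness for two middles; avoids square m+3. -/
lemma W4 (u v : Fin (m+4)) (h1 : 1 ≤ u.val) (huv : u.val < v.val) (h2 : v.val ≤ m+2) :
    ∃ p : ℝ × ℝ, p ∈ UnitSq (ctr m u) ∧ p ∈ UnitSq (ctr m v) ∧
      p ∉ UnitSq (ctr m ⟨m+3, by omega⟩) := by
  have hyu : yv m u.val = m+3-u.val := yv_mid m h1 (by omega)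
  have hyv : yv m v.val = m+3-v.val := yv_mid m (by omega) h2
  have hx : ((u.val:ℕ):ℝ)/((m:ℝ)+4) < ((v.val:ℕ):ℝ)/((m:ℝ)+4) := Dlt huv
  have hy : ((yv m v.val:ℕ):ℝ)/((m:ℝ)+4) < ((yv m u.val:ℕ):ℝ)/((m:ℝ)+4) := Dlt (by omega)
  have hx1 := @D1 m v.val (by omega)
  have hy1 := @D1 m (yv m u.val) (by omega)
  have hx0 := @D0 m u.val
  have hy0 := @D0 m (yv m v.val)
  have hvlast : ((v.val:ℕ):ℝ)/((m:ℝ)+4) < ((m+3:ℕ):ℝ)/((m:ℝ)+4) := Dlt (by omega)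
  refine ⟨(((v:ℕ):ℝ)/((m:ℝ)+4) - 1, ((yv m u : ℕ):ℝ)/((m:ℝ)+4) - 1), ?_, ?_, ?_⟩
  · rw [mem_unitSq]; simp only [ctr]
    constructor
    · rw [abs_le]; constructor <;> linarith
    · rw [abs_le]; constructor <;> ring_nf <;> norm_num
  · rw [mem_unitSq]; simp only [ctr]
    constructor
    · rw [abs_le]; constructor <;> ring_nf <;> norm_num
    · rw [abs_le]; constructor <;> linarith
  · apply notMem_x
    simp only [ctr]
    rw [lt_abs]; right; linarith

/-- W5 : a common point of squares 0 and m+3. -/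
lemma W5 : ∃ p : ℝ × ℝ, p ∈ UnitSq (ctr m ⟨0, by omega⟩) ∧
    p ∈ UnitSq (ctr m ⟨m+3, by omega⟩) := by
  have a2 := @D1 m (m+3) (by omega)
  have a0 := @D0 m (m+3)
  push_cast at a2 a0
  refine ⟨(((m+3:ℕ):ℝ)/((m:ℝ)+4)/2, ((m+3:ℕ):ℝ)/((m:ℝ)+4)/2), ?_, ?_⟩
  · rw [mem_unitSq]; simp only [ctr, yv_zero]
    push_cast
    constructor
    · rw [abs_le]; constructor <;> simp <;> linarith
    · rw [abs_le]; constructor <;> simp <;> linarith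
  · rw [mem_unitSq]; simp only [ctr, yv_last]
    push_cast
    constructor
    · rw [abs_le]; constructor <;> linarith
    · rw [abs_le]; constructor <;> linarith

lemma ctr_injective (m : ℕ) : Function.Injective (ctr m) := by
  intro k k' h
  have h1 : ((k.val:ℕ):ℝ)/((m:ℝ)+4) = ((k'.val:ℕ):ℝ)/((m:ℝ)+4) := congrArg Prod.fst h
  have hN' : ((m:ℝ)+4) ≠ 0 := ne_of_gt hN
  field_simp at h1
  exact Fin.ext (by exact_mod_cast h1)

end Stmt12Aux

namespace Stmt12Aux

def spair {N : ℕ} (i j : Fin N) : Fin N × Fin N := if i.val ≤ j.val then (i, j) else (j, i)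

lemma spair_cases {N : ℕ} {i j : Fin N} (h : i ≠ j) :
    (spair i j = (i, j) ∧ i < j) ∨ (spair i j = (j, i) ∧ j < i) := by
  have hne : i.val ≠ j.val := fun hv => h (Fin.ext hv)
  rcases Nat.lt_or_ge i.val j.val with hlt | hge
  · left
    constructor
    · unfold spair; rw [if_pos (Nat.le_of_lt hlt)]
    · exact Fin.lt_def.mpr hlt
  · have hlt : j.val < i.val := by omega
    right
    constructor
    · unfold spair; rw [if_neg (by omega)]
    · exact Fin.lt_def.mpr hlt

lemma spair_eq_left {N : ℕ} {a x y : Fin N} (hx : x ≠ a) (hy : y ≠ a)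
    (h : spair a x = spair a y) : x = y := by
  rcases spair_cases (Ne.symm hx) with ⟨h1, _⟩ | ⟨h1, _⟩ <;>
  rcases spair_cases (Ne.symm hy) with ⟨h2, _⟩ | ⟨h2, _⟩ <;>
  rw [h1, h2, Prod.mk.injEq] at h <;> tauto

lemma spair_eq_right {N : ℕ} {a x y : Fin N} (hx : x ≠ a) (hy : y ≠ a)
    (h : spair x a = spair y a) : x = y := by
  rcases spair_cases hx with ⟨h1, _⟩ | ⟨h1, _⟩ <;>
  rcases spair_cases hy with ⟨h2, _⟩ | ⟨h2, _⟩ <;>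
  rw [h1, h2, Prod.mk.injEq] at h <;> tauto

lemma spair_comps {N : ℕ} {i j : Fin N} (h : i ≠ j) :
    ((spair i j).1 = i ∧ (spair i j).2 = j) ∨ ((spair i j).1 = j ∧ (spair i j).2 = i) := by
  rcases spair_cases h with ⟨h1, _⟩ | ⟨h1, _⟩ <;> rw [h1] <;> simp

lemma spair_lt {N : ℕ} {i j : Fin N} (h : i ≠ j) : (spair i j).1 < (spair i j).2 := by
  rcases spair_cases h with ⟨h1, hl⟩ | ⟨h1, hl⟩ <;> rw [h1] <;> exact hl

end Stmt12Aux


open Stmt12Aux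

/-- Lower bound: for every `n ≥ 4` there is a set of `n` unit squares with
pairwise distinct centers such that every ranking incurs at least `3n - 7`
visibilities. -/
theorem stmt_12 {n : ℕ} (hn : 4 ≤ n) :
    ∃ c : Fin n → ℝ × ℝ, Function.Injective c ∧
      ∀ σ : Equiv.Perm (Fin n),
        3 * n - 7 ≤ {p : Fin n × Fin n | p.1 < p.2 ∧ Sees (c ∘ σ) p.1 p.2}.ncard := by
  obtain ⟨m, rfl⟩ : ∃ m, n = m + 4 := ⟨n - 4, by omega⟩
  classical
  refine ⟨Stmt12Aux.ctr m, Stmt12Aux.ctr_injective m, ?_⟩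
  intro σ
  set E : Set (Fin (m+4) × Fin (m+4)) :=
    {p : Fin (m+4) × Fin (m+4) | p.1 < p.2 ∧ Sees (Stmt12Aux.ctr m ∘ σ) p.1 p.2} with hE
  set z0 : Fin (m+4) := ⟨0, by omega⟩ with hz0
  set zl : Fin (m+4) := ⟨m+3, by omega⟩ with hzl
  set A : Fin (m+4) := σ.symm z0 with hA
  set Z : Fin (m+4) := σ.symm zl with hZ
  have hz0l : z0 ≠ zl := by
    simp only [hz0, hzl, ne_eq, Fin.mk.injEq]; omega
  have hAZ : A ≠ Z := fun h => hz0l (σ.symm.injective h)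
  have hsA : σ A = z0 := Equiv.apply_symm_apply σ z0
  have hsZ : σ Z = zl := Equiv.apply_symm_apply σ zl
  -- middles
  set M : Finset (Fin (m+4)) := (Finset.univ.erase z0).erase zl with hM
  have hMmem : ∀ u, u ∈ M ↔ u ≠ zl ∧ u ≠ z0 := by
    intro u; simp [hM, Finset.mem_erase]
  have hMcard : M.card = m+2 := by
    rw [hM, Finset.card_erase_of_mem
      (Finset.mem_erase.mpr ⟨hz0l.symm, Finset.mem_univ _⟩),
      Finset.card_erase_of_mem (Finset.mem_univ _)]
    simp
  have hvalsM : ∀ u, u ∈ M → 1 ≤ u.val ∧ u.val ≤ m+2 := by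
    intro u hu
    obtain ⟨h1, h2⟩ := (hMmem u).mp hu
    have e1 : u.val ≠ m+3 := fun h => h1 (Fin.ext (by simpa [hzl] using h))
    have e2 : u.val ≠ 0 := fun h => h2 (Fin.ext (by simpa [hz0] using h))
    have := u.isLt
    omega
  -- middle positions
  set MP : Finset (Fin (m+4)) := M.image σ.symm with hMPdef
  have hMP : ∀ t, t ∈ MP ↔ (σ t ≠ zl ∧ σ t ≠ z0) := by
    intro t
    constructor
    · intro ht
      obtain ⟨u, hu, hut⟩ := Finset.mem_image.mp ht
      have : σ t = u := by rw [← hut, Equiv.apply_symm_apply]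
      rw [this]; exact (hMmem u).mp hu
    · intro h
      exact Finset.mem_image.mpr ⟨σ t, (hMmem _).mpr h, Equiv.symm_apply_apply σ t⟩
  have hMPcard : MP.card = m+2 := by
    rw [hMPdef, Finset.card_image_of_injective _ σ.symm.injective, hMcard]
  have hMPne : MP.Nonempty := Finset.card_pos.mp (by omega)
  have hAnotMP : A ∉ MP := fun h => ((hMP A).mp h).2 hsA
  have hZnotMP : Z ∉ MP := fun h => ((hMP Z).mp h).1 hsZ
  set L : Fin (m+4) := MP.max' hMPne with hL
  set src : Finset (Fin (m+4)) := MP.erase L with hsrc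
  have hsrccard : src.card = m+1 := by
    rw [hsrc, Finset.card_erase_of_mem (MP.max'_mem hMPne), hMPcard]
    omega
  have hsrcMP : ∀ t, t ∈ src → t ∈ MP := fun t ht => Finset.mem_of_mem_erase ht
  have hfil : ∀ t, t ∈ src → (MP.filter (fun s => t < s)).Nonempty := by
    intro t ht
    have htL : t < L := lt_of_le_of_ne (Finset.le_max' _ _ (hsrcMP t ht))
      (Finset.ne_of_mem_erase ht)
    exact ⟨L, Finset.mem_filter.mpr ⟨MP.max'_mem hMPne, htL⟩⟩
  set nxt : Fin (m+4) → Fin (m+4) := fun t =>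
    if h : (MP.filter (fun s => t < s)).Nonempty then (MP.filter (fun s => t < s)).min' h
    else t with hnxtdef
  have hnxt_mem : ∀ t, t ∈ src → nxt t ∈ MP ∧ t < nxt t := by
    intro t ht
    have h := hfil t ht
    simp only [hnxtdef, dif_pos h]
    have hmem := Finset.min'_mem (MP.filter (fun s => t < s)) h
    rw [Finset.mem_filter] at hmem
    exact hmem
  have hnxt_min : ∀ t, t ∈ src → ∀ j : Fin (m+4), j ∈ MP → t < j → nxt t ≤ j := by
    intro t ht j hj hlt
    have h := hfil t ht
    simp only [hnxtdef, dif_pos h]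
    exact Finset.min'_le _ _ (Finset.mem_filter.mpr ⟨hj, hlt⟩)
  have hinter : ∀ t, t ∈ src → ∀ j : Fin (m+4), t < j → j < nxt t → σ j = z0 ∨ σ j = zl := by
    intro t ht j h1 h2
    by_contra hc
    push_neg at hc
    have hjMP : j ∈ MP := (hMP j).mpr ⟨hc.2, hc.1⟩
    exact absurd (hnxt_min t ht j hjMP h1) (not_le.mpr h2)
  -- edge lemmas
  have hE1 : ∀ u, u ∈ M → spair A (σ.symm u) ∈ E := by
    intro u hu
    obtain ⟨hv1, hv2⟩ := hvalsM u hu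
    obtain ⟨hu1, hu2⟩ := (hMmem u).mp hu
    obtain ⟨p, hp0, hpu, hpb⟩ := W1 (m := m) u hv1 hv2
    have hdiff : A ≠ σ.symm u := fun h => hu2 (σ.symm.injective h.symm) |>.elim
    have hblock : ∀ j : Fin (m+4), j ≠ A → j ≠ σ.symm u → p ∉ UnitSq (ctr m (σ j)) := by
      intro j hjA hju
      apply hpb
      · intro h0
        exact hjA (by rw [hA]; rw [← Equiv.symm_apply_apply σ j, show σ j = z0 from Fin.ext h0])
      · intro huu
        exact hju (by rw [← Equiv.symm_apply_apply σ j, huu])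
    rcases spair_cases hdiff with ⟨heq, hlt⟩ | ⟨heq, hlt⟩ <;> rw [heq]
    · refine ⟨hlt, p, ⟨?_, ?_⟩, ?_⟩
      · show p ∈ UnitSq (ctr m (σ A)); rw [hsA]; exact hp0
      · show p ∈ UnitSq (ctr m (σ (σ.symm u))); rw [Equiv.apply_symm_apply]; exact hpu
      · intro j hj1 hj2
        exact hblock j (ne_of_gt hj1) (ne_of_lt hj2)
    · refine ⟨hlt, p, ⟨?_, ?_⟩, ?_⟩
      · show p ∈ UnitSq (ctr m (σ (σ.symm u))); rw [Equiv.apply_symm_apply]; exact hpu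
      · show p ∈ UnitSq (ctr m (σ A)); rw [hsA]; exact hp0
      · intro j hj1 hj2
        exact hblock j (ne_of_lt hj2) (ne_of_gt hj1)
  have hE2 : ∀ u, u ∈ M → spair (σ.symm u) Z ∈ E := by
    intro u hu
    obtain ⟨hv1, hv2⟩ := hvalsM u hu
    obtain ⟨hu1, hu2⟩ := (hMmem u).mp hu
    obtain ⟨p, hpu, hpl, hpb⟩ := W2 (m := m) u hv1 hv2
    have hdiff : σ.symm u ≠ Z := fun h => hu1 (σ.symm.injective h)
    have hblock : ∀ j : Fin (m+4), j ≠ Z → j ≠ σ.symm u → p ∉ UnitSq (ctr m (σ j)) := by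
      intro j hjZ hju
      apply hpb
      · intro h0
        exact hjZ (by rw [hZ]; rw [← Equiv.symm_apply_apply σ j, show σ j = zl from Fin.ext (by simpa [hzl] using h0)])
      · intro huu
        exact hju (by rw [← Equiv.symm_apply_apply σ j, huu])
    rcases spair_cases hdiff with ⟨heq, hlt⟩ | ⟨heq, hlt⟩ <;> rw [heq]
    · refine ⟨hlt, p, ⟨?_, ?_⟩, ?_⟩
      · show p ∈ UnitSq (ctr m (σ (σ.symm u))); rw [Equiv.apply_symm_apply]; exact hpu
      · show p ∈ UnitSq (ctr m (σ Z)); rw [hsZ]; exact hpl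
      · intro j hj1 hj2
        exact hblock j (ne_of_lt hj2) (ne_of_gt hj1)
    · refine ⟨hlt, p, ⟨?_, ?_⟩, ?_⟩
      · show p ∈ UnitSq (ctr m (σ Z)); rw [hsZ]; exact hpl
      · show p ∈ UnitSq (ctr m (σ (σ.symm u))); rw [Equiv.apply_symm_apply]; exact hpu
      · intro j hj1 hj2
        exact hblock j (ne_of_gt hj1) (ne_of_lt hj2)
  -- good middle gaps are edges
  have hjz0 : ∀ j : Fin (m+4), σ j = z0 → j = A := by
    intro j h; rw [hA, ← h, Equiv.symm_apply_apply]
  have hjzl : ∀ j : Fin (m+4), σ j = zl → j = Z := by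
    intro j h; rw [hZ, ← h, Equiv.symm_apply_apply]
  have hσM : ∀ t, t ∈ MP → σ t ∈ M := fun t ht => (hMmem _).mpr ((hMP t).mp ht)
  have hE3good : ∀ t, t ∈ src → ¬(t < A ∧ A < nxt t ∧ t < Z ∧ Z < nxt t) →
      (t, nxt t) ∈ E := by
    intro t ht hbad
    have htMP := hsrcMP t ht
    obtain ⟨hntMP, htlt⟩ := hnxt_mem t ht
    have hvt := hvalsM (σ t) (hσM t htMP)
    have hvn := hvalsM (σ (nxt t)) (hσM _ hntMP)
    have hvne : (σ t).val ≠ (σ (nxt t)).val :=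
      fun h => (ne_of_lt htlt) (σ.injective (Fin.ext h))
    by_cases hZin : t < Z ∧ Z < nxt t
    · -- all blockers are the square zl ; use SW witness W4
      have hAnot : ¬(t < A ∧ A < nxt t) := fun hAin => hbad ⟨hAin.1, hAin.2, hZin.1, hZin.2⟩
      have hblock : ∀ j : Fin (m+4), t < j → j < nxt t → σ j = zl := by
        intro j h1 h2
        rcases hinter t ht j h1 h2 with h | h
        · exact absurd ⟨(hjz0 j h) ▸ h1, (hjz0 j h) ▸ h2⟩ hAnot
        · exact h
      rcases Nat.lt_or_ge (σ t).val (σ (nxt t)).val with hlt | hge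
      · obtain ⟨p, hp1, hp2, hp3⟩ := W4 (m := m) (σ t) (σ (nxt t)) hvt.1 hlt hvn.2
        refine ⟨htlt, p, ⟨hp1, hp2⟩, ?_⟩
        intro j h1 h2
        rw [Function.comp_apply, hblock j h1 h2]
        exact hp3
      · have hlt : (σ (nxt t)).val < (σ t).val := by omega
        obtain ⟨p, hp1, hp2, hp3⟩ := W4 (m := m) (σ (nxt t)) (σ t) hvn.1 hlt hvt.2
        refine ⟨htlt, p, ⟨hp2, hp1⟩, ?_⟩
        intro j h1 h2
        rw [Function.comp_apply, hblock j h1 h2]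
        exact hp3
    · -- all blockers are the square z0 ; use NE witness W3
      have hblock : ∀ j : Fin (m+4), t < j → j < nxt t → σ j = z0 := by
        intro j h1 h2
        rcases hinter t ht j h1 h2 with h | h
        · exact h
        · exact absurd ⟨(hjzl j h) ▸ h1, (hjzl j h) ▸ h2⟩ hZin
      rcases Nat.lt_or_ge (σ t).val (σ (nxt t)).val with hlt | hge
      · obtain ⟨p, hp1, hp2, hp3⟩ := W3 (m := m) (σ t) (σ (nxt t)) hvt.1 hlt hvn.2
        refine ⟨htlt, p, ⟨hp1, hp2⟩, ?_⟩
        intro j h1 h2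
        rw [Function.comp_apply, hblock j h1 h2]
        exact hp3
      · have hlt : (σ (nxt t)).val < (σ t).val := by omega
        obtain ⟨p, hp1, hp2, hp3⟩ := W3 (m := m) (σ (nxt t)) (σ t) hvn.1 hlt hvt.2
        refine ⟨htlt, p, ⟨hp2, hp1⟩, ?_⟩
        intro j h1 h2
        rw [Function.comp_apply, hblock j h1 h2]
        exact hp3
  -- at most one bad gap
  have hbadunique : ∀ t1, t1 ∈ src → ∀ t2, t2 ∈ src →
      (t1 < A ∧ A < nxt t1 ∧ t1 < Z ∧ Z < nxt t1) →
      (t2 < A ∧ A < nxt t2 ∧ t2 < Z ∧ Z < nxt t2) → t1 = t2 := by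
    intro t1 h1 t2 h2 b1 b2
    by_contra hne
    rcases lt_or_gt_of_ne hne with hlt | hgt
    · have hle : nxt t1 ≤ t2 := hnxt_min t1 h1 t2 (hsrcMP t2 h2) hlt
      exact absurd (lt_trans (lt_of_lt_of_le b1.2.1 hle) b2.1) (lt_irrefl A)
    · have hle : nxt t2 ≤ t1 := hnxt_min t2 h2 t1 (hsrcMP t1 h1) hgt
      exact absurd (lt_trans (lt_of_lt_of_le b2.2.1 hle) b1.1) (lt_irrefl A)
  -- compensation edge
  have hEAZ : (∃ t0 ∈ src, t0 < A ∧ A < nxt t0 ∧ t0 < Z ∧ Z < nxt t0) →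
      spair A Z ∈ E := by
    rintro ⟨t0, ht0, hb⟩
    obtain ⟨p, hp0, hpl⟩ := W5 (m := m)
    have hnoblock : ∀ j : Fin (m+4), t0 < j → j < nxt t0 → j ≠ A → j ≠ Z → False := by
      intro j h1 h2 hjA hjZ
      rcases hinter t0 ht0 j h1 h2 with h | h
      · exact hjA (hjz0 j h)
      · exact hjZ (hjzl j h)
    rcases spair_cases hAZ with ⟨heq, hlt⟩ | ⟨heq, hlt⟩ <;> rw [heq]
    · refine ⟨hlt, p, ⟨?_, ?_⟩, ?_⟩
      · show p ∈ UnitSq (ctr m (σ A)); rw [hsA]; exact hp0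
      · show p ∈ UnitSq (ctr m (σ Z)); rw [hsZ]; exact hpl
      · intro j h1 h2
        exact (hnoblock j (lt_trans hb.1 h1) (lt_trans h2 hb.2.2.2)
          (ne_of_gt h1) (ne_of_lt h2)).elim
    · refine ⟨hlt, p, ⟨?_, ?_⟩, ?_⟩
      · show p ∈ UnitSq (ctr m (σ Z)); rw [hsZ]; exact hpl
      · show p ∈ UnitSq (ctr m (σ A)); rw [hsA]; exact hp0
      · intro j h1 h2
        exact (hnoblock j (lt_trans hb.2.2.1 h1) (lt_trans h2 hb.2.1)
          (ne_of_lt h2) (ne_of_gt h1)).elim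
  -- the three finsets of edges
  set T1 : Finset (Fin (m+4) × Fin (m+4)) := M.image (fun u => spair A (σ.symm u)) with hT1
  set T2 : Finset (Fin (m+4) × Fin (m+4)) := M.image (fun u => spair (σ.symm u) Z) with hT2
  have hsymA : ∀ u, u ∈ M → σ.symm u ≠ A := by
    intro u hu h
    exact ((hMmem u).mp hu).2 (σ.symm.injective (h.trans hA))
  have hsymZ : ∀ u, u ∈ M → σ.symm u ≠ Z := by
    intro u hu h
    exact ((hMmem u).mp hu).1 (σ.symm.injective (h.trans hZ))
  have hT1card : T1.card = m+2 := by
    rw [hT1, Finset.card_image_of_injOn, hMcard]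
    intro u hu u' hu' h
    exact σ.symm.injective (spair_eq_left (hsymA u hu) (hsymA u' hu') h)
  have hT2card : T2.card = m+2 := by
    rw [hT2, Finset.card_image_of_injOn, hMcard]
    intro u hu u' hu' h
    exact σ.symm.injective (spair_eq_right (hsymZ u hu) (hsymZ u' hu') h)
  have hT1comp : ∀ x, x ∈ T1 → (x.1 = A ∨ x.2 = A) ∧ x.1 ≠ Z ∧ x.2 ≠ Z := by
    intro x hx
    obtain ⟨u, hu, rfl⟩ := Finset.mem_image.mp hx
    have h1 : A ≠ σ.symm u := fun h => (hsymA u hu) h.symm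
    rcases spair_comps h1 with ⟨e1, e2⟩ | ⟨e1, e2⟩ <;> rw [e1, e2]
    · exact ⟨Or.inl rfl, hAZ, hsymZ u hu⟩
    · exact ⟨Or.inr rfl, hsymZ u hu, hAZ⟩
  have hT2comp : ∀ x, x ∈ T2 → (x.1 = Z ∨ x.2 = Z) ∧ x.1 ≠ A ∧ x.2 ≠ A := by
    intro x hx
    obtain ⟨u, hu, rfl⟩ := Finset.mem_image.mp hx
    have h1 : σ.symm u ≠ Z := hsymZ u hu
    rcases spair_comps h1 with ⟨e1, e2⟩ | ⟨e1, e2⟩ <;> rw [e1, e2]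
    · exact ⟨Or.inr rfl, hsymA u hu, hAZ.symm⟩
    · exact ⟨Or.inl rfl, hAZ.symm, hsymA u hu⟩
  have hT1sub : ∀ x, x ∈ T1 → x ∈ E := by
    intro x hx
    obtain ⟨u, hu, rfl⟩ := Finset.mem_image.mp hx
    exact hE1 u hu
  have hT2sub : ∀ x, x ∈ T2 → x ∈ E := by
    intro x hx
    obtain ⟨u, hu, rfl⟩ := Finset.mem_image.mp hx
    exact hE2 u hu
  have hd12 : Disjoint T1 T2 := by
    rw [Finset.disjoint_left]
    intro x hx1 hx2
    rcases (hT1comp x hx1).1 with h | h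
    · exact (hT2comp x hx2).2.1 h
    · exact (hT2comp x hx2).2.2 h
  have hc12 : (T1 ∪ T2).card = 2*m+4 := by
    rw [Finset.card_union_of_disjoint hd12, hT1card, hT2card]
    omega
  have hMPcomp : ∀ t, t ∈ MP → t ≠ A ∧ t ≠ Z :=
    fun t ht => ⟨fun h => hAnotMP (h ▸ ht), fun h => hZnotMP (h ▸ ht)⟩
  -- now the case distinction on existence of a bad gap
  by_cases hex : ∃ t0 ∈ src, t0 < A ∧ A < nxt t0 ∧ t0 < Z ∧ Z < nxt t0
  · obtain ⟨t0, ht0, hb0⟩ := hex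
    set T3 : Finset (Fin (m+4) × Fin (m+4)) :=
      ((src.erase t0).image (fun t => (t, nxt t))) ∪ {spair A Z} with hT3
    have hT3comp : ∀ x, x ∈ (src.erase t0).image (fun t => (t, nxt t)) →
        (x.1 ≠ A ∧ x.1 ≠ Z) ∧ (x.2 ≠ A ∧ x.2 ≠ Z) := by
      intro x hx
      obtain ⟨t, ht, rfl⟩ := Finset.mem_image.mp hx
      have htsrc := Finset.mem_of_mem_erase ht
      exact ⟨hMPcomp t (hsrcMP t htsrc), hMPcomp _ ((hnxt_mem t htsrc).1)⟩
    have hAZcomp : ((spair A Z).1 = A ∧ (spair A Z).2 = Z) ∨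
        ((spair A Z).1 = Z ∧ (spair A Z).2 = A) := spair_comps hAZ
    have hdisjAZ : Disjoint ((src.erase t0).image (fun t => (t, nxt t)))
        ({spair A Z} : Finset (Fin (m+4) × Fin (m+4))) := by
      rw [Finset.disjoint_left]
      intro x hx hx2
      rw [Finset.mem_singleton] at hx2
      rcases hAZcomp with ⟨e1, _⟩ | ⟨e1, _⟩
      · exact ((hT3comp x hx).1.1) (by rw [hx2, e1])
      · exact ((hT3comp x hx).1.2) (by rw [hx2, e1])
    have hinj3 : Set.InjOn (fun t => (t, nxt t)) ↑(src.erase t0) :=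
      fun t _ t' _ h => congrArg Prod.fst h
    have hT3card : T3.card = m+1 := by
      rw [hT3, Finset.card_union_of_disjoint hdisjAZ, Finset.card_image_of_injOn hinj3,
        Finset.card_erase_of_mem ht0, hsrccard, Finset.card_singleton]
      omega
    have hT3sub : ∀ x, x ∈ T3 → x ∈ E := by
      intro x hx
      rw [hT3, Finset.mem_union] at hx
      rcases hx with hx | hx
      · obtain ⟨t, ht, rfl⟩ := Finset.mem_image.mp hx
        have htsrc := Finset.mem_of_mem_erase ht
        refine hE3good t htsrc (fun hbad => ?_)
        exact (Finset.ne_of_mem_erase ht) (hbadunique t htsrc t0 ht0 hbad hb0)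
      · rw [Finset.mem_singleton] at hx
        rw [hx]
        exact hEAZ ⟨t0, ht0, hb0⟩
    have hd3 : Disjoint (T1 ∪ T2) T3 := by
      rw [Finset.disjoint_right]
      intro x hx3 hx12
      rw [hT3, Finset.mem_union] at hx3
      rw [Finset.mem_union] at hx12
      rcases hx3 with hx3 | hx3
      · rcases hx12 with h | h
        · rcases (hT1comp x h).1 with e | e
          · exact (hT3comp x hx3).1.1 e
          · exact (hT3comp x hx3).2.1 e
        · rcases (hT2comp x h).1 with e | e
          · exact (hT3comp x hx3).1.2 e
          · exact (hT3comp x hx3).2.2 e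
      · rw [Finset.mem_singleton] at hx3
        subst hx3
        rcases hx12 with h | h
        · rcases hAZcomp with ⟨_, e2⟩ | ⟨e1, _⟩
          · exact (hT1comp _ h).2.2 e2
          · exact (hT1comp _ h).2.1 e1
        · rcases hAZcomp with ⟨e1, _⟩ | ⟨_, e2⟩
          · exact (hT2comp _ h).2.1 e1
          · exact (hT2comp _ h).2.2 e2
    have hTcard : ((T1 ∪ T2) ∪ T3).card = 3*m+5 := by
      rw [Finset.card_union_of_disjoint hd3, hc12, hT3card]
      omega
    have hTsub : ↑((T1 ∪ T2) ∪ T3) ⊆ E := by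
      intro x hx
      rw [Finset.coe_union, Finset.coe_union] at hx
      rcases hx with hx | hx
      · rcases hx with hx | hx
        · exact hT1sub x hx
        · exact hT2sub x hx
      · exact hT3sub x hx
    calc 3 * (m + 4) - 7 = 3*m+5 := by omega
      _ = ((T1 ∪ T2) ∪ T3).card := hTcard.symm
      _ = (((T1 ∪ T2) ∪ T3 : Finset _) : Set (Fin (m+4) × Fin (m+4))).ncard :=
          (Set.ncard_coe_finset _).symm
      _ ≤ E.ncard := Set.ncard_le_ncard hTsub (Set.toFinite E)
  · set T3 : Finset (Fin (m+4) × Fin (m+4)) := src.image (fun t => (t, nxt t)) with hT3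
    have hT3comp : ∀ x, x ∈ T3 → (x.1 ≠ A ∧ x.1 ≠ Z) ∧ (x.2 ≠ A ∧ x.2 ≠ Z) := by
      intro x hx
      obtain ⟨t, ht, rfl⟩ := Finset.mem_image.mp hx
      exact ⟨hMPcomp t (hsrcMP t ht), hMPcomp _ ((hnxt_mem t ht).1)⟩
    have hT3card : T3.card = m+1 := by
      rw [hT3, Finset.card_image_of_injOn, hsrccard]
      intro t ht t' ht' h
      exact congrArg Prod.fst h
    have hT3sub : ∀ x, x ∈ T3 → x ∈ E := by
      intro x hx
      obtain ⟨t, ht, rfl⟩ := Finset.mem_image.mp hx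
      exact hE3good t ht (fun hbad => hex ⟨t, ht, hbad⟩)
    have hd3 : Disjoint (T1 ∪ T2) T3 := by
      rw [Finset.disjoint_right]
      intro x hx3 hx12
      rw [Finset.mem_union] at hx12
      rcases hx12 with h | h
      · rcases (hT1comp x h).1 with e | e
        · exact (hT3comp x hx3).1.1 e
        · exact (hT3comp x hx3).2.1 e
      · rcases (hT2comp x h).1 with e | e
        · exact (hT3comp x hx3).1.2 e
        · exact (hT3comp x hx3).2.2 e
    have hTcard : ((T1 ∪ T2) ∪ T3).card = 3*m+5 := by
      rw [Finset.card_union_of_disjoint hd3, hc12, hT3card]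
      omega
    have hTsub : ↑((T1 ∪ T2) ∪ T3) ⊆ E := by
      intro x hx
      rw [Finset.coe_union, Finset.coe_union] at hx
      rcases hx with hx | hx
      · rcases hx with hx | hx
        · exact hT1sub x hx
        · exact hT2sub x hx
      · exact hT3sub x hx
    calc 3 * (m + 4) - 7 = 3*m+5 := by omega
      _ = ((T1 ∪ T2) ∪ T3).card := hTcard.symm
      _ = (((T1 ∪ T2) ∪ T3 : Finset _) : Set (Fin (m+4) × Fin (m+4))).ncard :=
          (Set.ncard_coe_finset _).symm
      _ ≤ E.ncard := Set.ncard_le_ncard hTsub (Set.toFinite E)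
end
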